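/- arXiv:2602.13617 — 11 statements merged into one kernel-verified Lean document; each statement's English description precedes it below -/
import Mathlib

section
/- If (a_1,...,a_k) and (b_1,...,b_k) are 3AP-free permutations of {1,...,k}, then the sequence (2a_1,...,2a_k, 2b_1-1,...,2b_k-1) is a 3AP-free permutation of {1,...,2k}. -/
/-- A sequence `f : Fin n → Fin n`, whose values represent the numbers `1,...,n`
via `v ↦ (v : ℕ) + 1`, is 3AP-free if there are no indices `i < j < k` with
`f i + f k = 2 * f j` (as numbers in `{1,...,n}`). -/
def IsAPFree {n : ℕ} (f : Fin n → Fin n) : Prop :=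
  ∀ i j k : Fin n, i < j → j < k →
    ((f i : ℕ) + 1) + ((f k : ℕ) + 1) ≠ 2 * ((f j : ℕ) + 1)

/-- `theta n` is the number of 3AP-free permutations of `{1,...,n}`. -/
noncomputable def theta (n : ℕ) : ℕ :=
  Nat.card {f : Fin n → Fin n // Function.Bijective f ∧ IsAPFree f}

/-- If `a` and `b` are 3AP-free permutations of `{1,...,k}`, then the concatenated
sequence `(2a₁,...,2a_k, 2b₁-1,...,2b_k-1)` is a 3AP-free permutation of `{1,...,2k}`.
Here `c` is that sequence in `Fin (2*k)` index form: the number at position `i` is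
`(c i : ℕ) + 1`. -/
theorem interleave_apFree (k : ℕ) (a b : Fin k → Fin k)
    (ha : Function.Bijective a) (hb : Function.Bijective b)
    (ha3 : IsAPFree a) (hb3 : IsAPFree b)
    (c : Fin (2 * k) → Fin (2 * k))
    (hc : ∀ i : Fin (2 * k), (c i : ℕ) + 1 =
      if h : (i : ℕ) < k then 2 * ((a ⟨i, h⟩ : ℕ) + 1)
      else 2 * ((b ⟨(i : ℕ) - k, by have := i.isLt; omega⟩ : ℕ) + 1) - 1) :
    Function.Bijective c ∧ IsAPFree c := by
  constructor
  · rw [Fintype.bijective_iff_injective_and_card]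
    refine ⟨?_, rfl⟩
    intro i j hij
    have hi := hc i; have hj := hc j
    rw [hij] at hi
    by_cases h1 : (i : ℕ) < k <;> by_cases h2 : (j : ℕ) < k
    · rw [dif_pos h1] at hi; rw [dif_pos h2] at hj
      have : a ⟨i, h1⟩ = a ⟨j, h2⟩ := Fin.ext (by omega)
      have := ha.1 this
      exact Fin.ext (by simpa [Fin.mk.injEq] using this)
    · rw [dif_pos h1] at hi; rw [dif_neg h2] at hj
      have hbv := (b ⟨(j : ℕ) - k, by have := j.isLt; omega⟩).isLt
      omega
    · rw [dif_neg h1] at hi; rw [dif_pos h2] at hj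
      have hbv := (b ⟨(i : ℕ) - k, by have := i.isLt; omega⟩).isLt
      omega
    · rw [dif_neg h1] at hi; rw [dif_neg h2] at hj
      have : b ⟨(i : ℕ) - k, by have := i.isLt; omega⟩ =
          b ⟨(j : ℕ) - k, by have := j.isLt; omega⟩ := Fin.ext (by omega)
      have := hb.1 this
      exact Fin.ext (by simp [Fin.mk.injEq] at this; omega)
  · intro i j l hij hjl heq
    have hi := hc i; have hj := hc j; have hl := hc l
    have hijv : (i : ℕ) < (j : ℕ) := hij
    have hjlv : (j : ℕ) < (l : ℕ) := hjl
    by_cases h1 : (i : ℕ) < k <;> by_cases h3 : (l : ℕ) < k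
    · -- all in first block
      have h2 : (j : ℕ) < k := by omega
      rw [dif_pos h1] at hi; rw [dif_pos h2] at hj; rw [dif_pos h3] at hl
      exact ha3 ⟨i, h1⟩ ⟨j, h2⟩ ⟨l, h3⟩ hijv hjlv (by omega)
    · -- i first, l second: parity contradiction
      rw [dif_pos h1] at hi; rw [dif_neg h3] at hl
      by_cases h2 : (j : ℕ) < k
      · rw [dif_pos h2] at hj
        have := (b ⟨(l : ℕ) - k, by have := l.isLt; omega⟩).isLt
        omega
      · rw [dif_neg h2] at hj
        have := (b ⟨(l : ℕ) - k, by have := l.isLt; omega⟩).isLt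
        have := (b ⟨(j : ℕ) - k, by have := j.isLt; omega⟩).isLt
        omega
    · omega
    · -- all in second block
      have h2 : ¬ (j : ℕ) < k := by omega
      rw [dif_neg h1] at hi; rw [dif_neg h2] at hj; rw [dif_neg h3] at hl
      exact hb3 ⟨(i : ℕ) - k, by have := i.isLt; omega⟩
        ⟨(j : ℕ) - k, by have := j.isLt; omega⟩
        ⟨(l : ℕ) - k, by have := l.isLt; omega⟩
        (by simp [Fin.mk_lt_mk]; omega) (by simp [Fin.mk_lt_mk]; omega) (by omega)
end

section
/- For every k ≥ 1, θ(2k) ≥ 2·θ(k)², where θ(n) denotes the number of 3AP-free permutations of {1,...,n}. -/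
/-- The set of 3AP-free permutations. -/
def APSet (n : ℕ) := {f : Fin n → Fin n // Function.Bijective f ∧ IsAPFree f}

instance (n : ℕ) : Finite (APSet n) := by
  unfold APSet; infer_instance

/-- Interleaving construction. -/
def interleave {k : ℕ} (b : Bool) (σ τ : Fin k → Fin k) (i : Fin (2 * k)) :
    Fin (2 * k) :=
  if h : (i : ℕ) < k then
    ⟨2 * (σ ⟨i, h⟩ : ℕ) + (if b then 1 else 0),
      by have := (σ ⟨i, h⟩).isLt; split <;> omega⟩
  else
    ⟨2 * (τ ⟨(i : ℕ) - k, by have := i.isLt; omega⟩ : ℕ) + (if b then 0 else 1),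
      by have := (τ ⟨(i : ℕ) - k, by have := i.isLt; omega⟩).isLt; split <;> omega⟩

lemma interleave_val_lt {k : ℕ} (b : Bool) (σ τ : Fin k → Fin k) (i : Fin (2 * k))
    (h : (i : ℕ) < k) :
    (interleave b σ τ i : ℕ) = 2 * (σ ⟨i, h⟩ : ℕ) + (if b then 1 else 0) := by
  simp [interleave, h]

lemma interleave_val_ge {k : ℕ} (b : Bool) (σ τ : Fin k → Fin k) (i : Fin (2 * k))
    (h : ¬ (i : ℕ) < k) :
    (interleave b σ τ i : ℕ) =
      2 * (τ ⟨(i : ℕ) - k, by have := i.isLt; omega⟩ : ℕ) + (if b then 0 else 1) := by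
  simp [interleave, h]

lemma interleave_injective {k : ℕ} (b : Bool) (σ τ : Fin k → Fin k)
    (hσ : Function.Injective σ) (hτ : Function.Injective τ) :
    Function.Injective (interleave b σ τ) := by
  intro i j hij
  have hval : (interleave b σ τ i : ℕ) = (interleave b σ τ j : ℕ) := by rw [hij]
  by_cases hi : (i : ℕ) < k <;> by_cases hj : (j : ℕ) < k
  · rw [interleave_val_lt b σ τ i hi, interleave_val_lt b σ τ j hj] at hval
    have : σ ⟨i, hi⟩ = σ ⟨j, hj⟩ := Fin.ext (by omega)
    have h2 := hσ this
    have h3 : (i : ℕ) = (j : ℕ) := by simpa using h2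
    exact Fin.ext h3
  · rw [interleave_val_lt b σ τ i hi, interleave_val_ge b σ τ j hj] at hval
    cases b <;> simp at hval <;> omega
  · rw [interleave_val_ge b σ τ i hi, interleave_val_lt b σ τ j hj] at hval
    cases b <;> simp at hval <;> omega
  · rw [interleave_val_ge b σ τ i hi, interleave_val_ge b σ τ j hj] at hval
    have : τ ⟨(i : ℕ) - k, by have := i.isLt; omega⟩ =
        τ ⟨(j : ℕ) - k, by have := j.isLt; omega⟩ := Fin.ext (by omega)
    have := hτ this
    have hv : (i : ℕ) - k = (j : ℕ) - k := congrArg Fin.val this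
    exact Fin.ext (by omega)

lemma interleave_apfree {k : ℕ} (b : Bool) (σ τ : Fin k → Fin k)
    (hσ : IsAPFree σ) (hτ : IsAPFree τ) :
    IsAPFree (interleave b σ τ) := by
  intro i j l hij hjl heq
  have hij' : (i : ℕ) < (j : ℕ) := hij
  have hjl' : (j : ℕ) < (l : ℕ) := hjl
  by_cases hi : (i : ℕ) < k
  · by_cases hl : (l : ℕ) < k
    · -- all in first block
      have hj : (j : ℕ) < k := lt_trans hjl' hl
      rw [interleave_val_lt b σ τ i hi, interleave_val_lt b σ τ j hj,
        interleave_val_lt b σ τ l hl] at heq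
      refine hσ ⟨i, hi⟩ ⟨j, hj⟩ ⟨l, hl⟩ hij' hjl' ?_
      cases b <;> simp at heq <;> omega
    · -- mixed: parity contradiction
      rw [interleave_val_lt b σ τ i hi, interleave_val_ge b σ τ l hl] at heq
      cases b <;> simp at heq <;> omega
  · -- all in second block
    have hj : ¬ (j : ℕ) < k := by omega
    have hl : ¬ (l : ℕ) < k := by omega
    rw [interleave_val_ge b σ τ i hi, interleave_val_ge b σ τ j hj,
      interleave_val_ge b σ τ l hl] at heq
    refine hτ ⟨(i : ℕ) - k, by have := i.isLt; omega⟩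
      ⟨(j : ℕ) - k, by have := j.isLt; omega⟩
      ⟨(l : ℕ) - k, by have := l.isLt; omega⟩ ?_ ?_ ?_
    · show (i : ℕ) - k < (j : ℕ) - k; omega
    · show (j : ℕ) - k < (l : ℕ) - k; omega
    · cases b <;> simp at heq ⊢ <;> omega

/-- The combined injection. -/
noncomputable def Phi (k : ℕ) (x : Bool × APSet k × APSet k) : APSet (2 * k) :=
  ⟨interleave x.1 x.2.1.1 x.2.2.1,
    (Finite.injective_iff_bijective).mp
      (interleave_injective x.1 x.2.1.1 x.2.2.1 x.2.1.2.1.injective x.2.2.2.1.injective),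
    interleave_apfree x.1 x.2.1.1 x.2.2.1 x.2.1.2.2 x.2.2.2.2⟩

lemma Phi_injective (k : ℕ) (hk : 1 ≤ k) : Function.Injective (Phi k) := by
  rintro ⟨b, ⟨σ, hσ⟩, ⟨τ, hτ⟩⟩ ⟨b', ⟨σ', hσ'⟩, ⟨τ', hτ'⟩⟩ h
  have hfun : interleave b σ τ = interleave b' σ' τ' := congrArg Subtype.val h
  have hzero : (0 : ℕ) < 2 * k := by omega
  -- b = b'
  have hk0 : ((⟨0, hzero⟩ : Fin (2 * k)) : ℕ) < k := by show 0 < k; omega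
  have hb : b = b' := by
    have h0 := congrArg (fun f => (f (⟨0, hzero⟩ : Fin (2 * k)) : ℕ)) hfun
    rw [interleave_val_lt b σ τ _ hk0, interleave_val_lt b' σ' τ' _ hk0] at h0
    cases b <;> cases b' <;> simp at h0 ⊢ <;> omega
  subst hb
  have hσeq : σ = σ' := by
    funext i
    have hik : ((⟨(i : ℕ), by have := i.isLt; omega⟩ : Fin (2 * k)) : ℕ) < k := i.isLt
    have h0 := congrArg (fun f => (f (⟨(i : ℕ), by have := i.isLt; omega⟩ : Fin (2 * k)) : ℕ)) hfun
    rw [interleave_val_lt b σ τ _ hik, interleave_val_lt b σ' τ' _ hik] at h0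
    simp only [Fin.val_mk, Fin.eta] at h0
    exact Fin.ext (by omega)
  have hτeq : τ = τ' := by
    funext i
    have hik : ¬ ((⟨(i : ℕ) + k, by have := i.isLt; omega⟩ : Fin (2 * k)) : ℕ) < k := by
      simp
    have h0 := congrArg
      (fun f => (f (⟨(i : ℕ) + k, by have := i.isLt; omega⟩ : Fin (2 * k)) : ℕ)) hfun
    rw [interleave_val_ge b σ τ _ hik, interleave_val_ge b σ' τ' _ hik] at h0
    simp only [Fin.val_mk, Nat.add_sub_cancel, Fin.eta] at h0
    exact Fin.ext (by omega)
  subst hσeq; subst hτeq; rfl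

theorem theta_double_lower (k : ℕ) (hk : 1 ≤ k) :
    2 * theta k ^ 2 ≤ theta (2 * k) := by
  have hcard : Nat.card (Bool × APSet k × APSet k) ≤ Nat.card (APSet (2 * k)) :=
    Nat.card_le_card_of_injective (Phi k) (Phi_injective k hk)
  have h1 : Nat.card (Bool × APSet k × APSet k) = 2 * theta k ^ 2 := by
    rw [Nat.card_prod, Nat.card_prod]
    have : Nat.card Bool = 2 := by simp [Nat.card_eq_fintype_card]
    rw [this]
    show 2 * (theta k * theta k) = 2 * theta k ^ 2
    ring
  have h2 : Nat.card (APSet (2 * k)) = theta (2 * k) := rfl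
  omega
end

section
/- For every n ≥ 1, θ(2n+1) ≥ θ(n+1)·θ(n). -/
/-- Interleave: odd values (as `2g+1` in 1-based terms) first, then even values. -/
def combine (n : ℕ) (g : Fin (n+1) → Fin (n+1)) (h : Fin n → Fin n) :
    Fin (2*n+1) → Fin (2*n+1) := fun i =>
  if hi : (i : ℕ) < n + 1 then
    ⟨2 * (g ⟨i, hi⟩ : ℕ), by have := (g ⟨i, hi⟩).isLt; omega⟩
  else
    ⟨2 * (h ⟨(i : ℕ) - (n+1), by have := i.isLt; omega⟩ : ℕ) + 1,
      by have := (h ⟨(i : ℕ) - (n+1), by have := i.isLt; omega⟩).isLt; omega⟩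

lemma combine_lt (n : ℕ) (g : Fin (n+1) → Fin (n+1)) (h : Fin n → Fin n)
    (i : Fin (2*n+1)) (hi : (i : ℕ) < n + 1) :
    combine n g h i = ⟨2 * (g ⟨i, hi⟩ : ℕ), by have := (g ⟨i, hi⟩).isLt; omega⟩ := by
  simp [combine, hi]

lemma combine_ge (n : ℕ) (g : Fin (n+1) → Fin (n+1)) (h : Fin n → Fin n)
    (i : Fin (2*n+1)) (hi : ¬ (i : ℕ) < n + 1) :
    combine n g h i = ⟨2 * (h ⟨(i : ℕ) - (n+1), by have := i.isLt; omega⟩ : ℕ) + 1,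
      by have := (h ⟨(i : ℕ) - (n+1), by have := i.isLt; omega⟩).isLt; omega⟩ := by
  simp [combine, hi]

lemma combine_inj (n : ℕ) (g : Fin (n+1) → Fin (n+1)) (h : Fin n → Fin n)
    (hg : Function.Injective g) (hh : Function.Injective h) :
    Function.Injective (combine n g h) := by
  intro i j hij
  by_cases hi : (i : ℕ) < n + 1 <;> by_cases hj : (j : ℕ) < n + 1
  · rw [combine_lt n g h i hi, combine_lt n g h j hj] at hij
    have : (g ⟨i, hi⟩ : ℕ) = (g ⟨j, hj⟩ : ℕ) := by
      have := Fin.mk.injEq .. ▸ hij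
      omega
    have h2 := hg (Fin.ext this)
    have h3 : (i : ℕ) = (j : ℕ) := by
      have := congrArg Fin.val h2; simpa using this
    exact Fin.ext h3
  · rw [combine_lt n g h i hi, combine_ge n g h j hj] at hij
    have := congrArg Fin.val hij
    simp at this; omega
  · rw [combine_ge n g h i hi, combine_lt n g h j hj] at hij
    have := congrArg Fin.val hij
    simp at this; omega
  · rw [combine_ge n g h i hi, combine_ge n g h j hj] at hij
    have h1 := congrArg Fin.val hij
    simp only at h1
    have : (h ⟨(i : ℕ) - (n+1), by have := i.isLt; omega⟩ : ℕ)
        = (h ⟨(j : ℕ) - (n+1), by have := j.isLt; omega⟩ : ℕ) := by omega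
    have := hh (Fin.ext this)
    have : (i : ℕ) - (n+1) = (j : ℕ) - (n+1) := congrArg Fin.val this
    exact Fin.ext (by omega)

lemma combine_apfree (n : ℕ) (g : Fin (n+1) → Fin (n+1)) (h : Fin n → Fin n)
    (hg : IsAPFree g) (hh : IsAPFree h) : IsAPFree (combine n g h) := by
  intro i j k hij hjk
  have hij' : (i : ℕ) < (j : ℕ) := hij
  have hjk' : (j : ℕ) < (k : ℕ) := hjk
  by_cases hi : (i : ℕ) < n + 1 <;> by_cases hk : (k : ℕ) < n + 1
  · -- all three in first block
    have hj : (j : ℕ) < n + 1 := by omega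
    rw [combine_lt n g h i hi, combine_lt n g h j hj, combine_lt n g h k hk]
    simp only
    have := hg ⟨i, hi⟩ ⟨j, hj⟩ ⟨k, hk⟩ (by exact hij') (by exact hjk')
    omega
  · -- endpoints mixed: i in first, k in second
    rw [combine_lt n g h i hi, combine_ge n g h k hk]
    by_cases hj : (j : ℕ) < n + 1
    · rw [combine_lt n g h j hj]; simp only; omega
    · rw [combine_ge n g h j hj]; simp only; omega
  · omega
  · have hj : ¬ (j : ℕ) < n + 1 := by omega
    rw [combine_ge n g h i hi, combine_ge n g h j hj, combine_ge n g h k hk]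
    simp only
    have := hh ⟨(i : ℕ) - (n+1), by have := i.isLt; omega⟩
      ⟨(j : ℕ) - (n+1), by have := j.isLt; omega⟩
      ⟨(k : ℕ) - (n+1), by have := k.isLt; omega⟩
      (by simp [Fin.mk_lt_mk]; omega) (by simp [Fin.mk_lt_mk]; omega)
    omega

set_option maxHeartbeats 1000000 in
theorem theta_odd_lower (n : ℕ) (hn : 1 ≤ n) :
    theta (n + 1) * theta n ≤ theta (2 * n + 1) := by
  classical
  have key : theta (n+1) * theta n =
      Nat.card ({f : Fin (n+1) → Fin (n+1) // Function.Bijective f ∧ IsAPFree f} ×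
        {f : Fin n → Fin n // Function.Bijective f ∧ IsAPFree f}) := by
    rw [Nat.card_prod]; rfl
  rw [key, theta]
  apply Nat.card_le_card_of_injective
    (f := fun p : ({f : Fin (n+1) → Fin (n+1) // Function.Bijective f ∧ IsAPFree f} ×
        {f : Fin n → Fin n // Function.Bijective f ∧ IsAPFree f}) =>
      (⟨combine n p.1.1 p.2.1,
        Finite.injective_iff_bijective.mp
          (combine_inj n p.1.1 p.2.1 p.1.2.1.injective p.2.2.1.injective),
        combine_apfree n p.1.1 p.2.1 p.1.2.2 p.2.2.2⟩ :
        {f : Fin (2*n+1) → Fin (2*n+1) // Function.Bijective f ∧ IsAPFree f}))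
  rintro ⟨⟨g, hg⟩, ⟨h, hh⟩⟩ ⟨⟨g', hg'⟩, ⟨h', hh'⟩⟩ heq
  simp only [Subtype.mk.injEq, Prod.mk.injEq] at heq ⊢
  have heq' : combine n g h = combine n g' h' := heq
  constructor
  · ext a : 1
    have hlt : ((⟨(a : ℕ), by have := a.isLt; omega⟩ : Fin (2*n+1)) : ℕ) < n + 1 := a.isLt
    have := congrFun heq' ⟨(a : ℕ), by have := a.isLt; omega⟩
    rw [combine_lt n g h _ hlt, combine_lt n g' h' _ hlt] at this
    have := congrArg Fin.val this
    simp only at this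
    have hga : (g a : ℕ) = (g' a : ℕ) := by
      simpa using this
    exact Fin.ext hga
  · ext a : 1
    have h2 := congrArg Fin.val (congrFun heq' ⟨(a : ℕ) + (n+1), by have := a.isLt; omega⟩)
    simp only [combine, Fin.val_mk, show ¬((a : ℕ) + (n+1) < n + 1) by omega, dif_neg,
      not_false_iff, Nat.add_sub_cancel] at h2
    have h3 : (h ⟨(a:ℕ), a.isLt⟩ : ℕ) = (h' ⟨(a:ℕ), a.isLt⟩ : ℕ) := by omega
    have h4 : h ⟨(a:ℕ), a.isLt⟩ = h' ⟨(a:ℕ), a.isLt⟩ := Fin.ext h3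
    simpa using h4
end

section
/- For every n ≥ 1, θ(n) ≥ 2^{n-1}. -/
/-- Combine two permutations into blocks: first block of size `a` placed on values
`2x + o1`, second block of size `b` placed on values `2x + o2`. -/
def gcomb (n a b o1 o2 : ℕ) (hab : a + b = n)
    (H1 : ∀ x, x < a → 2 * x + o1 < n) (H2 : ∀ x, x < b → 2 * x + o2 < n)
    (g : Fin a → Fin a) (h : Fin b → Fin b) : Fin n → Fin n :=
  fun i => if hi : (i : ℕ) < a then ⟨2 * (g ⟨i, hi⟩ : ℕ) + o1, H1 _ (g ⟨i, hi⟩).2⟩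
    else ⟨2 * (h ⟨(i : ℕ) - a, by have := i.2; omega⟩ : ℕ) + o2,
      H2 _ (h ⟨(i : ℕ) - a, by have := i.2; omega⟩).2⟩

lemma gcomb_val_lt (n a b o1 o2 : ℕ) (hab : a + b = n) (H1 H2) (g : Fin a → Fin a)
    (h : Fin b → Fin b) (i : Fin n) (hi : (i : ℕ) < a) :
    (gcomb n a b o1 o2 hab H1 H2 g h i : ℕ) = 2 * (g ⟨i, hi⟩ : ℕ) + o1 := by
  simp only [gcomb, dif_pos hi]

lemma gcomb_val_ge (n a b o1 o2 : ℕ) (hab : a + b = n) (H1 H2) (g : Fin a → Fin a)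
    (h : Fin b → Fin b) (i : Fin n) (hi : ¬ ((i : ℕ) < a)) :
    (gcomb n a b o1 o2 hab H1 H2 g h i : ℕ)
      = 2 * (h ⟨(i : ℕ) - a, by have := i.2; omega⟩ : ℕ) + o2 := by
  simp only [gcomb, dif_neg hi]

lemma gcomb_injective (n a b o1 o2 : ℕ) (hab : a + b = n) (H1 H2) (g : Fin a → Fin a)
    (h : Fin b → Fin b) (ho : o1 % 2 ≠ o2 % 2) (hg : Function.Injective g)
    (hh : Function.Injective h) :
    Function.Injective (gcomb n a b o1 o2 hab H1 H2 g h) := by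
  intro i j hij
  have hij' := congrArg Fin.val hij
  by_cases hi : (i : ℕ) < a <;> by_cases hj : (j : ℕ) < a
  · rw [gcomb_val_lt n a b o1 o2 hab H1 H2 g h i hi,
      gcomb_val_lt n a b o1 o2 hab H1 H2 g h j hj] at hij'
    have h3 := hg (Fin.ext (show (g ⟨i, hi⟩ : ℕ) = (g ⟨j, hj⟩ : ℕ) by omega))
    have h4 := congrArg Fin.val h3
    simp only [Fin.val_mk] at h4
    exact Fin.ext h4
  · rw [gcomb_val_lt n a b o1 o2 hab H1 H2 g h i hi,
      gcomb_val_ge n a b o1 o2 hab H1 H2 g h j hj] at hij'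
    omega
  · rw [gcomb_val_ge n a b o1 o2 hab H1 H2 g h i hi,
      gcomb_val_lt n a b o1 o2 hab H1 H2 g h j hj] at hij'
    omega
  · rw [gcomb_val_ge n a b o1 o2 hab H1 H2 g h i hi,
      gcomb_val_ge n a b o1 o2 hab H1 H2 g h j hj] at hij'
    have h3 := hh (Fin.ext
      (show ((h ⟨(i:ℕ)-a, by have := i.2; omega⟩ : Fin b) : ℕ)
        = ((h ⟨(j:ℕ)-a, by have := j.2; omega⟩ : Fin b) : ℕ) by omega))
    have h4 := congrArg Fin.val h3
    simp only [Fin.val_mk] at h4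
    have := i.2; have := j.2
    exact Fin.ext (by omega)

lemma gcomb_apfree (n a b o1 o2 : ℕ) (hab : a + b = n) (H1 H2) (g : Fin a → Fin a)
    (h : Fin b → Fin b) (hsum : o1 + o2 = 1) (hg : IsAPFree g) (hh : IsAPFree h) :
    IsAPFree (gcomb n a b o1 o2 hab H1 H2 g h) := by
  intro i j k hij hjk heq
  have hij' : (i : ℕ) < (j : ℕ) := hij
  have hjk' : (j : ℕ) < (k : ℕ) := hjk
  by_cases hk : (k : ℕ) < a
  · have hj : (j : ℕ) < a := by omega
    have hi : (i : ℕ) < a := by omega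
    rw [gcomb_val_lt n a b o1 o2 hab H1 H2 g h i hi,
      gcomb_val_lt n a b o1 o2 hab H1 H2 g h j hj,
      gcomb_val_lt n a b o1 o2 hab H1 H2 g h k hk] at heq
    exact hg ⟨i, hi⟩ ⟨j, hj⟩ ⟨k, hk⟩ (Fin.mk_lt_mk.mpr hij') (Fin.mk_lt_mk.mpr hjk')
      (by omega)
  · by_cases hi : (i : ℕ) < a
    · rw [gcomb_val_lt n a b o1 o2 hab H1 H2 g h i hi,
        gcomb_val_ge n a b o1 o2 hab H1 H2 g h k hk] at heq
      omega
    · have hj : ¬ ((j : ℕ) < a) := by omega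
      rw [gcomb_val_ge n a b o1 o2 hab H1 H2 g h i hi,
        gcomb_val_ge n a b o1 o2 hab H1 H2 g h j hj,
        gcomb_val_ge n a b o1 o2 hab H1 H2 g h k hk] at heq
      have hia := i.2; have hja := j.2; have hka := k.2
      exact hh ⟨(i:ℕ)-a, by omega⟩ ⟨(j:ℕ)-a, by omega⟩ ⟨(k:ℕ)-a, by omega⟩
        (Fin.mk_lt_mk.mpr (by omega)) (Fin.mk_lt_mk.mpr (by omega)) (by omega)

/-- The subtype of 3AP-free permutations. -/
def Ssub (k : ℕ) : Type := {f : Fin k → Fin k // Function.Bijective f ∧ IsAPFree f}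

instance (k : ℕ) : Finite (Ssub k) := Subtype.finite

lemma theta_eq (k : ℕ) : theta k = Nat.card (Ssub k) := rfl

def Emap (n a b : ℕ) (hab : a + b = n) (hba : b + a = n)
    (H1 : ∀ x, x < a → 2 * x + 0 < n) (H2 : ∀ x, x < b → 2 * x + 1 < n) :
    Bool × Ssub a × Ssub b → Ssub n
  | (false, g, h) =>
    ⟨gcomb n a b 0 1 hab H1 H2 g.1 h.1,
      (Finite.injective_iff_bijective).mp
        (gcomb_injective n a b 0 1 hab H1 H2 g.1 h.1 (by omega) g.2.1.1 h.2.1.1),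
      gcomb_apfree n a b 0 1 hab H1 H2 g.1 h.1 (by omega) g.2.2 h.2.2⟩
  | (true, g, h) =>
    ⟨gcomb n b a 1 0 hba H2 H1 h.1 g.1,
      (Finite.injective_iff_bijective).mp
        (gcomb_injective n b a 1 0 hba H2 H1 h.1 g.1 (by omega) h.2.1.1 g.2.1.1),
      gcomb_apfree n b a 1 0 hba H2 H1 h.1 g.1 (by omega) h.2.2 g.2.2⟩

lemma Emap_false (n a b : ℕ) (hab hba H1 H2) (g : Ssub a) (h : Ssub b) :
    (Emap n a b hab hba H1 H2 (false, g, h)).1 = gcomb n a b 0 1 hab H1 H2 g.1 h.1 := rfl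

lemma Emap_true (n a b : ℕ) (hab hba H1 H2) (g : Ssub a) (h : Ssub b) :
    (Emap n a b hab hba H1 H2 (true, g, h)).1 = gcomb n b a 1 0 hba H2 H1 h.1 g.1 := rfl

lemma Emap_injective (n a b : ℕ) (hab : a + b = n) (hba : b + a = n)
    (H1 : ∀ x, x < a → 2 * x + 0 < n) (H2 : ∀ x, x < b → 2 * x + 1 < n)
    (ha1 : 1 ≤ a) (hb1 : 1 ≤ b) :
    Function.Injective (Emap n a b hab hba H1 H2) := by
  have h0 : (0 : ℕ) < n := by omega
  rintro ⟨c, g, h⟩ ⟨c', g', h'⟩ hpq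
  have hfun := congrArg Subtype.val hpq
  have hcc : c = c' := by
    cases c <;> cases c' <;> try rfl
    · exfalso
      rw [Emap_false, Emap_true] at hfun
      have hv := congrArg Fin.val (congrFun hfun ⟨0, h0⟩)
      have e1 := gcomb_val_lt n a b 0 1 hab H1 H2 g.1 h.1 ⟨0, h0⟩
        (by simp only [Fin.val_mk]; omega)
      have e2 := gcomb_val_lt n b a 1 0 hba H2 H1 h'.1 g'.1 ⟨0, h0⟩
        (by simp only [Fin.val_mk]; omega)
      omega
    · exfalso
      rw [Emap_true, Emap_false] at hfun
      have hv := congrArg Fin.val (congrFun hfun ⟨0, h0⟩)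
      have e1 := gcomb_val_lt n b a 1 0 hba H2 H1 h.1 g.1 ⟨0, h0⟩
        (by simp only [Fin.val_mk]; omega)
      have e2 := gcomb_val_lt n a b 0 1 hab H1 H2 g'.1 h'.1 ⟨0, h0⟩
        (by simp only [Fin.val_mk]; omega)
      omega
  subst hcc
  have hg : g = g' := by
    apply Subtype.ext; funext x
    have hx : (x : ℕ) < a := x.2
    cases c
    · rw [Emap_false, Emap_false] at hfun
      have hxn : (x : ℕ) < n := by omega
      have hv := congrArg Fin.val (congrFun hfun ⟨(x : ℕ), hxn⟩)
      have e1 := gcomb_val_lt n a b 0 1 hab H1 H2 g.1 h.1 ⟨(x : ℕ), hxn⟩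
        (by simp only [Fin.val_mk]; omega)
      have e2 := gcomb_val_lt n a b 0 1 hab H1 H2 g'.1 h'.1 ⟨(x : ℕ), hxn⟩
        (by simp only [Fin.val_mk]; omega)
      simp only [Fin.val_mk, Fin.eta] at e1 e2
      apply Fin.ext; omega
    · rw [Emap_true, Emap_true] at hfun
      have hxn : b + (x : ℕ) < n := by omega
      have hv := congrArg Fin.val (congrFun hfun ⟨b + (x : ℕ), hxn⟩)
      have e1 := gcomb_val_ge n b a 1 0 hba H2 H1 h.1 g.1 ⟨b + (x : ℕ), hxn⟩
        (by simp only [Fin.val_mk]; omega)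
      have e2 := gcomb_val_ge n b a 1 0 hba H2 H1 h'.1 g'.1 ⟨b + (x : ℕ), hxn⟩
        (by simp only [Fin.val_mk]; omega)
      simp only [Fin.val_mk, Nat.add_sub_cancel_left, Fin.eta] at e1 e2
      apply Fin.ext; omega
  have hh : h = h' := by
    apply Subtype.ext; funext x
    have hx : (x : ℕ) < b := x.2
    cases c
    · rw [Emap_false, Emap_false] at hfun
      have hxn : a + (x : ℕ) < n := by omega
      have hv := congrArg Fin.val (congrFun hfun ⟨a + (x : ℕ), hxn⟩)
      have e1 := gcomb_val_ge n a b 0 1 hab H1 H2 g.1 h.1 ⟨a + (x : ℕ), hxn⟩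
        (by simp only [Fin.val_mk]; omega)
      have e2 := gcomb_val_ge n a b 0 1 hab H1 H2 g'.1 h'.1 ⟨a + (x : ℕ), hxn⟩
        (by simp only [Fin.val_mk]; omega)
      simp only [Fin.val_mk, Nat.add_sub_cancel_left, Fin.eta] at e1 e2
      apply Fin.ext; omega
    · rw [Emap_true, Emap_true] at hfun
      have hxn : (x : ℕ) < n := by omega
      have hv := congrArg Fin.val (congrFun hfun ⟨(x : ℕ), hxn⟩)
      have e1 := gcomb_val_lt n b a 1 0 hba H2 H1 h.1 g.1 ⟨(x : ℕ), hxn⟩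
        (by simp only [Fin.val_mk]; omega)
      have e2 := gcomb_val_lt n b a 1 0 hba H2 H1 h'.1 g'.1 ⟨(x : ℕ), hxn⟩
        (by simp only [Fin.val_mk]; omega)
      simp only [Fin.val_mk, Fin.eta] at e1 e2
      apply Fin.ext; omega
  rw [hg, hh]

theorem theta_ge_two_pow (n : ℕ) (hn : 1 ≤ n) :
    2 ^ (n - 1) ≤ theta n := by
  induction n using Nat.strong_induction_on with
  | _ n ih =>
  rcases Nat.lt_or_ge n 2 with h2 | h2
  · have hn1 : n = 1 := by omega
    subst hn1
    have hne : Nonempty (Ssub 1) := by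
      refine ⟨⟨id, Function.bijective_id, ?_⟩⟩
      intro i j k hij hjk
      exact absurd hij (by simp [Subsingleton.elim i j])
    have : 0 < theta 1 := by
      rw [theta_eq]; exact Nat.card_pos
    exact this
  · set a := (n + 1) / 2 with ha_def
    set b := n / 2 with hb_def
    have hab : a + b = n := by omega
    have hba : b + a = n := by omega
    have ha1 : 1 ≤ a := by omega
    have hb1 : 1 ≤ b := by omega
    have haln : a < n := by omega
    have hbln : b < n := by omega
    have H1 : ∀ x, x < a → 2 * x + 0 < n := by omega
    have H2 : ∀ x, x < b → 2 * x + 1 < n := by omega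
    have hcard := Nat.card_le_card_of_injective _
      (Emap_injective n a b hab hba H1 H2 ha1 hb1)
    have hcard2 : Nat.card (Bool × Ssub a × Ssub b) = 2 * theta a * theta b := by
      rw [Nat.card_prod, Nat.card_prod, theta_eq, theta_eq, Nat.card_eq_fintype_card,
        Fintype.card_bool, mul_assoc]
    calc 2 ^ (n - 1) = 2 * 2 ^ (a - 1) * 2 ^ (b - 1) := by
          rw [mul_assoc, ← pow_add, ← pow_succ']
          congr 1
          omega
      _ ≤ 2 * theta a * theta b :=
          Nat.mul_le_mul (Nat.mul_le_mul_left 2 (ih a haln ha1)) (ih b hbln hb1)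
      _ = Nat.card (Bool × Ssub a × Ssub b) := hcard2.symm
      _ ≤ theta n := by rw [theta_eq]; exact hcard
end

section
/- For every n ≥ 1, θ(n) ≤ ⌊(n+1)/2⌋! · ⌈(n+1)/2⌉!. -/
/-- 3AP-freeness for lists of naturals. -/
def APF (l : List ℕ) : Prop := ∀ i j k : ℕ, i < j → j < k → k < l.length →
  l.getD i 0 + l.getD k 0 ≠ 2 * l.getD j 0

/-- The set of 3AP-free lists that are permutations of `1, ..., n`. -/
def Sset (n : ℕ) : Set (List ℕ) := {l | l.Perm (List.range' 1 n) ∧ APF l}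

lemma Sset_finite (n : ℕ) : (Sset n).Finite := by
  apply Set.Finite.subset (List.range' 1 n).permutations.toFinset.finite_toSet
  intro l hl
  simp only [List.mem_toFinset, List.mem_permutations, Finset.coe_sort_coe, Finset.mem_coe]
  exact hl.1

/-- The list with the (first occurrence of the) value `n` removed. -/
def reduced (n : ℕ) (l : List ℕ) : List ℕ :=
  l.take (List.idxOf n l) ++ l.drop (List.idxOf n l + 1)

/-- The number of "prefix-type" midpoints: values `m` with `n/2 < m < n` which occur
before their partner `2*m - n`. -/
def cP (n : ℕ) (l' : List ℕ) : ℕ :=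
  ((Finset.Ico (n / 2 + 1) n).filter
    (fun m => List.idxOf m l' < List.idxOf (2 * m - n) l')).card

lemma step_main {n : ℕ} (hn : 1 ≤ n) {l : List ℕ} (hl : l ∈ Sset n) :
    reduced n l ∈ Sset (n - 1) ∧ cP n (reduced n l) ≤ List.idxOf n l ∧
      List.idxOf n l - cP n (reduced n l) < n / 2 + 1 ∧
      l = (reduced n l).take (List.idxOf n l) ++ n :: (reduced n l).drop (List.idxOf n l) := by
  obtain ⟨hperm, hAPF⟩ := hl
  set s := List.idxOf n l with hs_def
  set a := l.take s with ha_def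
  set b := l.drop (s + 1) with hb_def
  have hnl : n ∈ l := hperm.mem_iff.mpr (List.mem_range'_1.mpr ⟨hn, by omega⟩)
  have hs : s < l.length := List.idxOf_lt_length_iff.mpr hnl
  have hlen : l.length = n := by rw [hperm.length_eq, List.length_range']
  have ha : a.length = s := by rw [ha_def, List.length_take]; omega
  have hdec : l = a ++ n :: b := by
    conv_lhs => rw [← List.take_append_drop s l]
    rw [ha_def, hb_def]
    congr 1
    rw [← List.getElem_cons_drop hs, List.getElem_idxOf hs]
  have hred : reduced n l = a ++ b := rfl
  set l' := a ++ b with hl'_def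
  have hlen' : l'.length = n - 1 := by
    rw [hl'_def, List.length_append, ha, hb_def, List.length_drop]; omega
  -- permutation property of l'
  have hperm' : l'.Perm (List.range' 1 (n - 1)) := by
    have h1 : (n :: l').Perm (List.range' 1 n) := by
      refine List.Perm.trans ?_ hperm
      rw [hdec]; exact List.perm_middle.symm
    have h2 : List.range' 1 n = List.range' 1 (n - 1) ++ [n] := by
      have := List.range'_concat (step := 1) (s := 1) (n := n - 1)
      rw [show n - 1 + 1 = n from by omega] at this
      rw [this, show 1 + 1 * (n - 1) = n from by omega]
    have h3 : (n :: l').Perm (n :: List.range' 1 (n - 1)) := by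
      rw [h2] at h1
      exact h1.trans (List.perm_append_singleton n _)
    exact h3.cons_inv
  -- getD facts
  have hgetn : l.getD s 0 = n := by
    rw [hdec, List.getD_append_right a (n :: b) 0 s (by omega), ha]
    simp
  have hshift1 : ∀ i, i < s → l.getD i 0 = l'.getD i 0 := by
    intro i hi
    rw [hdec, List.getD_append a (n :: b) 0 i (by omega),
      hl'_def, List.getD_append a b 0 i (by omega)]
  have hshift2 : ∀ i, s ≤ i → l.getD (i + 1) 0 = l'.getD i 0 := by
    intro i hi
    rw [hdec, List.getD_append_right a (n :: b) 0 (i + 1) (by omega),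
      hl'_def, List.getD_append_right a b 0 i (by omega), ha,
      show i + 1 - s = (i - s) + 1 from by omega, List.getD_cons_succ]
  -- APF for l'
  have hAPF' : APF l' := by
    intro i j k hij hjk hk
    have hkl : k < l.length := by omega
    rcases lt_or_ge k s with hks | hks
    · rw [← hshift1 i (by omega), ← hshift1 j (by omega), ← hshift1 k (by omega)]
      exact hAPF i j k hij hjk hkl
    · rcases lt_or_ge j s with hjs | hjs
      · rw [← hshift1 i (by omega), ← hshift1 j (by omega), ← hshift2 k hks]
        exact hAPF i j (k + 1) hij (by omega) (by omega)
      · rcases lt_or_ge i s with his | his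
        · rw [← hshift1 i (by omega), ← hshift2 j hjs, ← hshift2 k hks]
          exact hAPF i (j + 1) (k + 1) (by omega) (by omega) (by omega)
        · rw [← hshift2 i his, ← hshift2 j hjs, ← hshift2 k hks]
          exact hAPF (i + 1) (j + 1) (k + 1) (by omega) (by omega) (by omega)
  -- membership and index facts
  have hmem : ∀ v, 1 ≤ v → v < n → v ∈ l' := by
    intro v h1 h2
    exact hperm'.mem_iff.mpr (List.mem_range'_1.mpr ⟨h1, by omega⟩)
  have hidx : ∀ v ∈ l', List.idxOf v l' < l'.length ∧ l'.getD (List.idxOf v l') 0 = v := by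
    intro v hv
    have h1 : List.idxOf v l' < l'.length := List.idxOf_lt_length_iff.mpr hv
    exact ⟨h1, by rw [List.getD_eq_getElem _ _ h1, List.getElem_idxOf h1]⟩
  -- the two claims about positions of midpoints relative to the slot of n
  have claim_pre : ∀ m, n / 2 + 1 ≤ m → m < n →
      List.idxOf m l' < List.idxOf (2 * m - n) l' → List.idxOf m l' < s := by
    intro m hm1 hm2 hpp
    set x := 2 * m - n with hx_def
    obtain ⟨hpm, hgm⟩ := hidx m (hmem m (by omega) hm2)
    obtain ⟨hpx, hgx⟩ := hidx x (hmem x (by omega) (by omega))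
    by_contra hcon
    push_neg at hcon
    have := hAPF s (List.idxOf m l' + 1) (List.idxOf x l' + 1)
      (by omega) (by omega) (by omega)
    rw [hgetn, hshift2 _ (by omega), hshift2 _ (by omega), hgm, hgx] at this
    omega
  have claim_suf : ∀ m, n / 2 + 1 ≤ m → m < n →
      ¬ (List.idxOf m l' < List.idxOf (2 * m - n) l') →
      s ≤ List.idxOf m l' ∧ List.idxOf m l' < n - 1 := by
    intro m hm1 hm2 hpp
    set x := 2 * m - n with hx_def
    obtain ⟨hpm, hgm⟩ := hidx m (hmem m (by omega) hm2)
    obtain ⟨hpx, hgx⟩ := hidx x (hmem x (by omega) (by omega))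
    push_neg at hpp
    have hne : List.idxOf x l' ≠ List.idxOf m l' := by
      intro h; rw [h, hgm] at hgx; omega
    have hlt : List.idxOf x l' < List.idxOf m l' := by omega
    constructor
    · by_contra hcon
      push_neg at hcon
      have := hAPF (List.idxOf x l') (List.idxOf m l') s hlt hcon (by omega)
      rw [hgetn, hshift1 _ (by omega), hshift1 _ (by omega), hgm, hgx] at this
      omega
    · omega
  -- cardinality bounds
  set P := (Finset.Ico (n / 2 + 1) n).filter
      (fun m => List.idxOf m l' < List.idxOf (2 * m - n) l') with hP_def
  set Q := (Finset.Ico (n / 2 + 1) n).filter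
      (fun m => ¬ List.idxOf m l' < List.idxOf (2 * m - n) l') with hQ_def
  have hinj : ∀ (T : Finset ℕ), T ⊆ Finset.Ico (n / 2 + 1) n →
      Set.InjOn (fun m => List.idxOf m l') T := by
    intro T hT m1 h1 m2 h2 heq
    simp only at heq
    have hm1 := Finset.mem_Ico.mp (hT h1)
    have hm2 := Finset.mem_Ico.mp (hT h2)
    obtain ⟨_, hg1⟩ := hidx m1 (hmem m1 (by omega) hm1.2)
    obtain ⟨_, hg2⟩ := hidx m2 (hmem m2 (by omega) hm2.2)
    rw [← hg1, ← hg2, heq]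
  have hPcard : P.card ≤ s := by
    have : P.card ≤ (Finset.range s).card := by
      apply Finset.card_le_card_of_injOn (fun m => List.idxOf m l')
      · intro m hm
        rw [Finset.mem_coe, hP_def, Finset.mem_filter, Finset.mem_Ico] at hm
        rw [Finset.mem_coe, Finset.mem_range]
        exact claim_pre m hm.1.1 hm.1.2 hm.2
      · exact hinj P (Finset.filter_subset _ _)
    rwa [Finset.card_range] at this
  have hQcard : Q.card ≤ (n - 1) - s := by
    have : Q.card ≤ (Finset.Ico s (n - 1)).card := by
      apply Finset.card_le_card_of_injOn (fun m => List.idxOf m l')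
      · intro m hm
        rw [Finset.mem_coe, hQ_def, Finset.mem_filter, Finset.mem_Ico] at hm
        rw [Finset.mem_coe, Finset.mem_Ico]
        exact claim_suf m hm.1.1 hm.1.2 hm.2
      · exact hinj Q (Finset.filter_subset _ _)
    rwa [Nat.card_Ico] at this
  have hPQ : P.card + Q.card = n - (n / 2 + 1) := by
    rw [hP_def, hQ_def, Finset.card_filter_add_card_filter_not, Nat.card_Ico]
  have hcP : cP n (reduced n l) = P.card := rfl
  refine ⟨⟨hperm', hAPF'⟩, ?_, ?_, ?_⟩
  · rw [hcP]; omega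
  · rw [hcP]; omega
  · rw [hred, ← ha, List.take_left, List.drop_left, ← hdec]

lemma card_step (n : ℕ) (hn : 1 ≤ n) :
    Nat.card (Sset n) ≤ Nat.card (Sset (n - 1)) * (n / 2 + 1) := by
  have hfin : Finite (Sset (n - 1)) := (Sset_finite (n - 1)).to_subtype
  have h : Nat.card (Sset n) ≤ Nat.card ((Sset (n - 1)) × Fin (n / 2 + 1)) := by
    apply Nat.card_le_card_of_injective
      (f := fun l => (⟨reduced n l.1, (step_main hn l.2).1⟩,
        ⟨List.idxOf n l.1 - cP n (reduced n l.1), (step_main hn l.2).2.2.1⟩))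
    rintro ⟨l1, h1⟩ ⟨l2, h2⟩ heq
    simp only [Prod.mk.injEq, Subtype.mk.injEq, Fin.mk.injEq] at heq
    obtain ⟨hr, hc⟩ := heq
    have e1 := (step_main hn h1).2.1
    have e2 := (step_main hn h2).2.1
    rw [hr] at e1 hc
    have hs : List.idxOf n l1 = List.idxOf n l2 := by omega
    have r1 := (step_main hn h1).2.2.2
    have r2 := (step_main hn h2).2.2.2
    rw [hr, hs] at r1
    exact Subtype.ext (r1.trans r2.symm)
  rwa [Nat.card_prod, Nat.card_eq_fintype_card (α := Fin (n / 2 + 1)), Fintype.card_fin] at h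

lemma S_bound (n : ℕ) :
    Nat.card (Sset n) ≤ Nat.factorial ((n + 1) / 2) * Nat.factorial ((n + 2) / 2) := by
  induction n with
  | zero =>
    have : Sset 0 = {([] : List ℕ)} := by
      ext l
      simp only [Sset, Set.mem_setOf_eq, Set.mem_singleton_iff]
      constructor
      · rintro ⟨h, -⟩
        simpa using h.eq_nil
      · rintro rfl
        exact ⟨by simp, fun i j k _ _ h => by simp at h⟩
    rw [this]
    simp [Nat.card_unique]
  | succ n ih =>
    have h1 := card_step (n + 1) (by omega)
    simp only [Nat.add_sub_cancel] at h1
    calc Nat.card (Sset (n + 1)) ≤ Nat.card (Sset n) * ((n + 1) / 2 + 1) := h1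
      _ ≤ Nat.factorial ((n + 1) / 2) * Nat.factorial ((n + 2) / 2) * ((n + 1) / 2 + 1) :=
          Nat.mul_le_mul_right _ ih
      _ = Nat.factorial ((n + 2) / 2) * Nat.factorial ((n + 3) / 2) := by
          rw [show (n + 3) / 2 = (n + 1) / 2 + 1 from by omega, Nat.factorial_succ]
          ring

lemma ofFn_mem {n : ℕ} (f : Fin n → Fin n) (hb : Function.Bijective f) (ha : IsAPFree f) :
    List.ofFn (fun i => (f i : ℕ) + 1) ∈ Sset n := by
  constructor
  · apply List.Subperm.antisymm
    · apply List.subperm_of_subset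
      · rw [List.nodup_ofFn]
        intro i j h
        simp only [add_left_inj] at h
        exact hb.1 (Fin.val_injective h)
      · intro x hx
        rw [List.mem_ofFn] at hx
        obtain ⟨i, rfl⟩ := hx
        refine List.mem_range'_1.mpr ⟨?_, ?_⟩
        · show 1 ≤ (f i : ℕ) + 1
          omega
        · show (f i : ℕ) + 1 < 1 + n
          have := (f i).isLt; omega
    · apply List.subperm_of_subset (List.nodup_range' (s := 1) (n := n))
      intro x hx
      obtain ⟨h1, h2⟩ := List.mem_range'_1.mp hx
      obtain ⟨i, hi⟩ := hb.2 ⟨x - 1, by omega⟩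
      rw [List.mem_ofFn]
      refine ⟨i, ?_⟩
      show (f i : ℕ) + 1 = x
      rw [hi]; simp; omega
  · intro i j k hij hjk hk
    rw [List.length_ofFn] at hk
    have hik : i < n := by omega
    have hjk' : j < n := by omega
    have hlen : ∀ m (hm : m < n),
        (List.ofFn (fun i => (f i : ℕ) + 1)).getD m 0 = (f ⟨m, hm⟩ : ℕ) + 1 := by
      intro m hm
      rw [List.getD_eq_getElem _ _ (by rw [List.length_ofFn]; exact hm), List.getElem_ofFn]
    rw [hlen i hik, hlen j hjk', hlen k hk]
    exact ha ⟨i, hik⟩ ⟨j, hjk'⟩ ⟨k, hk⟩ hij hjk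

lemma theta_le_S (n : ℕ) : theta n ≤ Nat.card (Sset n) := by
  have : Finite (Sset n) := (Sset_finite n).to_subtype
  apply Nat.card_le_card_of_injective
    (f := fun g => (⟨List.ofFn (fun i => (g.1 i : ℕ) + 1), ofFn_mem g.1 g.2.1 g.2.2⟩ : Sset n))
  intro g1 g2 heq
  simp only [Subtype.mk.injEq] at heq
  have h2 := List.ofFn_injective heq
  refine Subtype.ext (funext fun i => ?_)
  have hi := congrFun h2 i
  simp only [add_left_inj] at hi
  exact Fin.val_injective hi

theorem theta_le_factorials (n : ℕ) (hn : 1 ≤ n) :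
    theta n ≤ Nat.factorial ((n + 1) / 2) * Nat.factorial ((n + 2) / 2) := by
  exact (theta_le_S n).trans (S_bound n)
end

section
/- Let θ: ℕ → ℕ satisfy θ(k) ≥ 1 and 2·θ(k)² ≤ θ(2k) ≤ 21·θ(k)² for all k ≥ 1. Then for every fixed m ≥ 1, the real sequence b_t = θ(m·2^t)^{1/(m·2^t)} (t ≥ 0) is strictly increasing. -/
theorem b_strictMono (θ : ℕ → ℕ)
    (hpos : ∀ k, 1 ≤ k → 1 ≤ θ k)
    (hlo : ∀ k, 1 ≤ k → 2 * θ k ^ 2 ≤ θ (2 * k))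
    (hhi : ∀ k, 1 ≤ k → θ (2 * k) ≤ 21 * θ k ^ 2)
    (m : ℕ) (hm : 1 ≤ m) :
    StrictMono (fun t : ℕ => (θ (m * 2 ^ t) : ℝ) ^ (1 / (m * 2 ^ t : ℝ))) := by
  apply strictMono_nat_of_lt_succ
  intro t
  set k := m * 2 ^ t with hkdef
  have hk1 : 1 ≤ k := Nat.one_le_iff_ne_zero.mpr (by positivity)
  have h2k : m * 2 ^ (t + 1) = 2 * k := by rw [hkdef]; ring
  have hkR : (1 : ℝ) ≤ (k : ℝ) := by exact_mod_cast hk1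
  have hkpos : (0 : ℝ) < (k : ℝ) := lt_of_lt_of_le one_pos hkR
  have hθk : (1 : ℝ) ≤ (θ k : ℝ) := by exact_mod_cast hpos k hk1
  have hθkpos : (0 : ℝ) < (θ k : ℝ) := lt_of_lt_of_le one_pos hθk
  have hcast : ((m : ℝ) * 2 ^ (t + 1)) = 2 * (k : ℝ) := by
    rw [pow_succ]; push_cast [hkdef]; ring
  have hcast0 : ((m : ℝ) * 2 ^ t) = (k : ℝ) := by push_cast [hkdef]; ring
  rw [hcast, hcast0, h2k]
  have hlo' : (2 * (θ k : ℝ) ^ 2) ≤ (θ (2 * k) : ℝ) := by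
    exact_mod_cast hlo k hk1
  have he : (0 : ℝ) < 1 / (2 * (k : ℝ)) := by positivity
  have step1 : (2 * (θ k : ℝ) ^ 2) ^ (1 / (2 * (k : ℝ))) ≤
      (θ (2 * k) : ℝ) ^ (1 / (2 * (k : ℝ))) :=
    Real.rpow_le_rpow (by positivity) hlo' he.le
  have step2 : (2 * (θ k : ℝ) ^ 2) ^ (1 / (2 * (k : ℝ))) =
      (2 : ℝ) ^ (1 / (2 * (k : ℝ))) * (θ k : ℝ) ^ (1 / (k : ℝ)) := by
    rw [Real.mul_rpow (by norm_num) (by positivity), ← Real.rpow_natCast (θ k : ℝ) 2,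
      ← Real.rpow_mul hθkpos.le]
    norm_num
    congr 1
    field_simp
    ring_nf
    simp
  have h2gt : (1 : ℝ) < (2 : ℝ) ^ (1 / (2 * (k : ℝ))) :=
    Real.one_lt_rpow_iff_of_pos (by norm_num) |>.mpr (Or.inl ⟨by norm_num, he⟩)
  have hbpos : (0 : ℝ) < (θ k : ℝ) ^ (1 / (k : ℝ)) := Real.rpow_pos_of_pos hθkpos _
  calc (θ k : ℝ) ^ (1 / (k : ℝ))
      < (2 : ℝ) ^ (1 / (2 * (k : ℝ))) * (θ k : ℝ) ^ (1 / (k : ℝ)) := by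
        nlinarith
    _ = (2 * (θ k : ℝ) ^ 2) ^ (1 / (2 * (k : ℝ))) := step2.symm
    _ ≤ (θ (2 * k) : ℝ) ^ (1 / (2 * (k : ℝ))) := step1
end

section
/- Let θ: ℕ → ℕ satisfy θ(k) ≥ 1 and 2·θ(k)² ≤ θ(2k) ≤ 21·θ(k)² for all k ≥ 1. Then for every fixed m ≥ 1, the sequence b_t = θ(m·2^t)^{1/(m·2^t)} converges to some real limit L_m. -/
theorem b_converges (θ : ℕ → ℕ)
    (hpos : ∀ k, 1 ≤ k → 1 ≤ θ k)
    (hlo : ∀ k, 1 ≤ k → 2 * θ k ^ 2 ≤ θ (2 * k))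
    (hhi : ∀ k, 1 ≤ k → θ (2 * k) ≤ 21 * θ k ^ 2)
    (m : ℕ) (hm : 1 ≤ m) :
    ∃ L : ℝ, Filter.Tendsto
      (fun t : ℕ => (θ (m * 2 ^ t) : ℝ) ^ (1 / (m * 2 ^ t : ℝ)))
      Filter.atTop (nhds L) := by
  set a : ℕ → ℝ := fun t => Real.log (θ (m * 2 ^ t)) / ((m * 2 ^ t : ℕ) : ℝ) with ha
  have hk : ∀ t : ℕ, 1 ≤ m * 2 ^ t := fun t =>
    Nat.one_le_iff_ne_zero.mpr (by positivity)
  have hK : ∀ t : ℕ, (1 : ℝ) ≤ ((m * 2 ^ t : ℕ) : ℝ) := fun t => by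
    exact_mod_cast hk t
  have hθ1 : ∀ t : ℕ, (1 : ℝ) ≤ (θ (m * 2 ^ t) : ℝ) := fun t => by
    exact_mod_cast hpos _ (hk t)
  have hθpos : ∀ t : ℕ, (0 : ℝ) < (θ (m * 2 ^ t) : ℝ) := fun t =>
    lt_of_lt_of_le one_pos (hθ1 t)
  have hdist : ∀ t : ℕ, dist (a t) (a (t + 1)) ≤ (Real.log 21 / m) * (1 / 2) ^ t := by
    intro t
    set k := m * 2 ^ t with hkdef
    have hθk : (0 : ℝ) < (θ k : ℝ) := hθpos t
    have hθ2k : (0 : ℝ) < (θ (2 * k) : ℝ) := by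
      have : (1 : ℝ) ≤ (θ (2 * k) : ℝ) := by
        exact_mod_cast hpos _ (le_trans (hk t) (Nat.le_mul_of_pos_left _ two_pos))
      linarith
    have h2k : m * 2 ^ (t + 1) = 2 * k := by rw [hkdef]; ring
    have hlogup : Real.log (θ (2 * k)) ≤ Real.log 21 + 2 * Real.log (θ k) := by
      have h1 : (θ (2 * k) : ℝ) ≤ 21 * (θ k : ℝ) ^ 2 := by
        exact_mod_cast hhi k (hk t)
      have h2 : Real.log (θ (2 * k)) ≤ Real.log (21 * (θ k : ℝ) ^ 2) :=
        Real.log_le_log hθ2k h1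
      rw [Real.log_mul (by norm_num) (by positivity), Real.log_pow] at h2
      push_cast at h2 ⊢
      linarith
    have hlogdown : 2 * Real.log (θ k) ≤ Real.log (θ (2 * k)) := by
      have h1 : 2 * (θ k : ℝ) ^ 2 ≤ (θ (2 * k) : ℝ) := by
        exact_mod_cast hlo k (hk t)
      have h2 : Real.log (2 * (θ k : ℝ) ^ 2) ≤ Real.log (θ (2 * k)) :=
        Real.log_le_log (by positivity) h1
      rw [Real.log_mul (by norm_num) (by positivity), Real.log_pow] at h2
      have h2pos : (0:ℝ) ≤ Real.log 2 := Real.log_nonneg (by norm_num)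
      push_cast at h2 ⊢
      linarith
    have hKpos : (0 : ℝ) < (k : ℝ) := lt_of_lt_of_le one_pos (hK t)
    have haform : a t = Real.log (θ k) / (k : ℝ) := rfl
    have haform2 : a (t + 1) = Real.log (θ (2 * k)) / (2 * (k : ℝ)) := by
      simp only [ha, h2k]
      push_cast
      ring
    have hsub : a t - a (t + 1) =
        (2 * Real.log (θ k) - Real.log (θ (2 * k))) / (2 * (k : ℝ)) := by
      rw [haform, haform2]
      field_simp
    have hd : dist (a t) (a (t + 1)) =
        |2 * Real.log (θ k) - Real.log (θ (2 * k))| / (2 * (k : ℝ)) := by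
      rw [Real.dist_eq, hsub, abs_div, abs_of_pos (show (0:ℝ) < 2*(k:ℝ) by linarith)]
    rw [hd]
    have habs : |2 * Real.log (θ k) - Real.log (θ (2 * k))| ≤ Real.log 21 := by
      rw [abs_le]
      constructor <;> linarith
    have hlog21 : (0:ℝ) ≤ Real.log 21 := Real.log_nonneg (by norm_num)
    have hmpos : (0:ℝ) < m := by exact_mod_cast hm
    have hKval : ((k : ℕ) : ℝ) = (m : ℝ) * 2 ^ t := by
      rw [hkdef]; push_cast; ring
    calc |2 * Real.log (θ k) - Real.log (θ (2 * k))| / (2 * (k : ℝ))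
        ≤ Real.log 21 / (2 * (k : ℝ)) :=
          div_le_div_of_nonneg_right habs (by positivity)
      _ ≤ Real.log 21 / ((m : ℝ) * 2 ^ t) := by
          apply div_le_div_of_nonneg_left hlog21 (by positivity)
          rw [hKval]
          nlinarith [pow_pos (show (0:ℝ) < 2 by norm_num) t]
      _ = (Real.log 21 / m) * (1 / 2) ^ t := by
          rw [div_pow, one_pow]
          field_simp
  have hcauchy : CauchySeq a :=
    cauchySeq_of_le_geometric (1/2) (Real.log 21 / m) (by norm_num) hdist
  obtain ⟨L', hL'⟩ := cauchySeq_tendsto_of_complete hcauchy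
  refine ⟨Real.exp L', ?_⟩
  have heq : (fun t : ℕ => (θ (m * 2 ^ t) : ℝ) ^ (1 / (m * 2 ^ t : ℝ)))
      = fun t => Real.exp (a t) := by
    funext t
    rw [Real.rpow_def_of_pos (hθpos t)]
    congr 1
    simp only [ha]
    push_cast
    ring
  rw [heq]
  exact (Real.continuous_exp.continuousAt.tendsto.comp hL')
end

section
/- Let θ: ℕ → ℕ satisfy θ(k) ≥ 1 and 2·θ(k)² ≤ θ(2k) ≤ 21·θ(k)² for all k ≥ 1. Fix m ≥ 1 and let L_m be the limit of the sequence b_t = θ(m·2^t)^{1/(m·2^t)}. Then for every t ≥ 0, (2·θ(m·2^t))^{1/(m·2^t)} ≤ L_m ≤ (21·θ(m·2^t))^{1/(m·2^t)}. -/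
/-!
Put `n_s = m 2^s`. The upper inequality `θ(2k) ≤ 21 θ(k)²` says that `x_s = 21 θ(n_s)` satisfies
`x_{s+1} ≤ x_s²`, so `x_s^{1/n_s}` is antitone; the lower one says that `x_s = 2 θ(n_s)` satisfies
`x_s² ≤ x_{s+1}`, so `x_s^{1/n_s}` is monotone. Both sequences differ from `θ(n_s)^{1/n_s}` by the
factor `c^{1/n_s} → 1`, hence also tend to `L`, and a monotone (antitone) sequence lies below
(above) its limit.
-/

open Filter Topology

lemma rpow_one_div_two_pow_succ_of_sq {x : ℝ} (hx : 0 ≤ x) (d : ℝ) (s : ℕ) :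
    (x ^ 2) ^ (1 / (d * 2 ^ (s + 1))) = x ^ (1 / (d * 2 ^ s)) := by
  rw [← Real.rpow_natCast_mul hx]
  congr 1
  push_cast
  ring

section

variable {x : ℕ → ℝ} {d : ℝ}

lemma monotone_rpow_one_div_two_pow (hd : 0 ≤ d) (hx : ∀ s, 0 ≤ x s)
    (hsq : ∀ s, x s ^ 2 ≤ x (s + 1)) : Monotone fun s => x s ^ (1 / (d * 2 ^ s)) :=
  monotone_nat_of_le_succ fun s => by
    rw [← rpow_one_div_two_pow_succ_of_sq (hx s)]
    exact Real.rpow_le_rpow (by positivity) (hsq s) (by positivity)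

lemma antitone_rpow_one_div_two_pow (hd : 0 ≤ d) (hx : ∀ s, 0 ≤ x s)
    (hsq : ∀ s, x (s + 1) ≤ x s ^ 2) : Antitone fun s => x s ^ (1 / (d * 2 ^ s)) :=
  antitone_nat_of_succ_le fun s => by
    rw [← rpow_one_div_two_pow_succ_of_sq (hx s)]
    exact Real.rpow_le_rpow (hx (s + 1)) (hsq s) (by positivity)

lemma tendsto_rpow_one_div_two_pow {c : ℝ} (hc : 0 < c) (hd : 0 < d) :
    Tendsto (fun s : ℕ => c ^ (1 / (d * 2 ^ s))) atTop (𝓝 1) := by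
  have hexp : Tendsto (fun s : ℕ => 1 / (d * 2 ^ s)) atTop (𝓝 0) := by
    simpa only [one_div, Pi.inv_def] using
      (tendsto_pow_atTop_atTop_of_one_lt one_lt_two).const_mul_atTop hd |>.inv_tendsto_atTop
  simpa [Function.comp_def] using (Real.continuousAt_const_rpow hc.ne').tendsto.comp hexp

lemma Filter.Tendsto.const_mul_rpow_one_div_two_pow {L c : ℝ} (hx : ∀ s, 0 ≤ x s) (hc : 0 < c)
    (hd : 0 < d) (h : Tendsto (fun s => x s ^ (1 / (d * 2 ^ s))) atTop (𝓝 L)) :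
    Tendsto (fun s => (c * x s) ^ (1 / (d * 2 ^ s))) atTop (𝓝 L) := by
  have := (tendsto_rpow_one_div_two_pow hc hd).mul h
  rw [one_mul] at this
  exact this.congr fun s => (Real.mul_rpow hc.le (hx s)).symm

end

theorem limit_bounds_general (θ : ℕ → ℕ)
    (hlo : ∀ k, 1 ≤ k → 2 * θ k ^ 2 ≤ θ (2 * k))
    (hhi : ∀ k, 1 ≤ k → θ (2 * k) ≤ 21 * θ k ^ 2)
    (m : ℕ) (hm : 1 ≤ m) (L : ℝ)
    (hL : Filter.Tendsto
      (fun t : ℕ => (θ (m * 2 ^ t) : ℝ) ^ (1 / (m * 2 ^ t : ℝ)))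
      Filter.atTop (nhds L)) :
    ∀ t : ℕ,
      (2 * θ (m * 2 ^ t) : ℝ) ^ (1 / (m * 2 ^ t : ℝ)) ≤ L ∧
      L ≤ (21 * θ (m * 2 ^ t) : ℝ) ^ (1 / (m * 2 ^ t : ℝ)) := by
  intro t
  have hd : (0 : ℝ) < m := by exact_mod_cast hm
  have hk : ∀ s, 1 ≤ m * 2 ^ s := fun s => Nat.mul_pos hm (Nat.two_pow_pos s)
  have hdouble : ∀ s, m * 2 ^ (s + 1) = 2 * (m * 2 ^ s) := fun s => by ring
  have hθ : ∀ s, (0 : ℝ) ≤ θ (m * 2 ^ s) := fun s => Nat.cast_nonneg _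
  constructor
  · refine Monotone.ge_of_tendsto (monotone_rpow_one_div_two_pow hd.le (fun s => by positivity)
      fun s => ?_) (hL.const_mul_rpow_one_div_two_pow hθ two_pos hd) t
    have h := hlo _ (hk s)
    rw [hdouble]
    exact_mod_cast (by linarith : (2 * θ (m * 2 ^ s)) ^ 2 ≤ 2 * θ (2 * (m * 2 ^ s)))
  · refine Antitone.le_of_tendsto (antitone_rpow_one_div_two_pow hd.le (fun s => by positivity)
      fun s => ?_) (hL.const_mul_rpow_one_div_two_pow hθ (by norm_num) hd) t
    have h := hhi _ (hk s)
    rw [hdouble]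
    exact_mod_cast (by linarith : 21 * θ (2 * (m * 2 ^ s)) ≤ (21 * θ (m * 2 ^ s)) ^ 2)

theorem limit_bounds (θ : ℕ → ℕ)
    (hpos : ∀ k, 1 ≤ k → 1 ≤ θ k)
    (hlo : ∀ k, 1 ≤ k → 2 * θ k ^ 2 ≤ θ (2 * k))
    (hhi : ∀ k, 1 ≤ k → θ (2 * k) ≤ 21 * θ k ^ 2)
    (m : ℕ) (hm : 1 ≤ m) (L : ℝ)
    (hL : Filter.Tendsto
      (fun t : ℕ => (θ (m * 2 ^ t) : ℝ) ^ (1 / (m * 2 ^ t : ℝ)))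
      Filter.atTop (nhds L)) :
    ∀ t : ℕ,
      (2 * θ (m * 2 ^ t) : ℝ) ^ (1 / (m * 2 ^ t : ℝ)) ≤ L ∧
      L ≤ (21 * θ (m * 2 ^ t) : ℝ) ^ (1 / (m * 2 ^ t : ℝ)) :=
  limit_bounds_general θ hlo hhi m hm L hL
end

section
/- Let θ: ℕ → ℕ satisfy θ(k) ≥ 1 and 2·θ(k)² ≤ θ(2k) ≤ 21·θ(k)² for all k ≥ 1, together with θ(64) = 39911512393313043466768 and θ(75) = 30235147387260979648843264. Then the sequence (θ(n)^{1/n})_{n≥1} of real numbers does not converge. -/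
open Filter Real

theorem not_convergent (θ : ℕ → ℕ)
    (hpos : ∀ k, 1 ≤ k → 1 ≤ θ k)
    (hlo : ∀ k, 1 ≤ k → 2 * θ k ^ 2 ≤ θ (2 * k))
    (hhi : ∀ k, 1 ≤ k → θ (2 * k) ≤ 21 * θ k ^ 2)
    (h64 : θ 64 = 39911512393313043466768)
    (h75 : θ 75 = 30235147387260979648843264) :
    ¬ ∃ L : ℝ, Filter.Tendsto (fun n : ℕ => (θ n : ℝ) ^ (1 / (n : ℝ)))
      Filter.atTop (nhds L) := by
  rintro ⟨L, hL⟩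
  -- growth bounds along doubling
  have hlow : ∀ m : ℕ, (2 * θ 64) ^ 2 ^ m ≤ 2 * θ (64 * 2 ^ m) := by
    intro m
    induction m with
    | zero => simp
    | succ m ih =>
      have hn : 1 ≤ 64 * 2 ^ m := Nat.one_le_iff_ne_zero.mpr (by positivity)
      have h1 := hlo (64 * 2 ^ m) hn
      have heq : 64 * 2 ^ (m + 1) = 2 * (64 * 2 ^ m) := by ring
      rw [heq, pow_succ, pow_mul]
      calc ((2 * θ 64) ^ 2 ^ m) ^ 2 ≤ (2 * θ (64 * 2 ^ m)) ^ 2 :=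
            Nat.pow_le_pow_left ih 2
        _ ≤ 2 * θ (2 * (64 * 2 ^ m)) := by nlinarith
  have hhigh : ∀ m : ℕ, 21 * θ (75 * 2 ^ m) ≤ (21 * θ 75) ^ 2 ^ m := by
    intro m
    induction m with
    | zero => simp
    | succ m ih =>
      have hn : 1 ≤ 75 * 2 ^ m := Nat.one_le_iff_ne_zero.mpr (by positivity)
      have h1 := hhi (75 * 2 ^ m) hn
      have heq : 75 * 2 ^ (m + 1) = 2 * (75 * 2 ^ m) := by ring
      rw [heq, pow_succ, pow_mul]
      calc 21 * θ (2 * (75 * 2 ^ m)) ≤ (21 * θ (75 * 2 ^ m)) ^ 2 := by nlinarith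
        _ ≤ ((21 * θ 75) ^ 2 ^ m) ^ 2 := Nat.pow_le_pow_left ih 2
  set A : ℝ := 2 * (θ 64 : ℝ) with hAdef
  set B : ℝ := 21 * (θ 75 : ℝ) with hBdef
  have hθ64 : 1 ≤ θ 64 := hpos 64 (by norm_num)
  have hθ75 : 1 ≤ θ 75 := hpos 75 (by norm_num)
  have hA0 : (0:ℝ) ≤ A := by positivity
  have hB0 : (0:ℝ) ≤ B := by positivity
  -- subsequence tendsto facts
  have hφ : Tendsto (fun m : ℕ => 64 * 2 ^ m) atTop atTop := by
    have hsm : StrictMono (fun m : ℕ => 64 * 2 ^ m) := by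
      intro a b h
      have := Nat.pow_lt_pow_right (a := 2) one_lt_two h
      exact (mul_lt_mul_iff_right₀ (by norm_num : (0:ℕ) < 64)).mpr this
    exact hsm.tendsto_atTop
  have hψ : Tendsto (fun m : ℕ => 75 * 2 ^ m) atTop atTop := by
    have hsm : StrictMono (fun m : ℕ => 75 * 2 ^ m) := by
      intro a b h
      have := Nat.pow_lt_pow_right (a := 2) one_lt_two h
      exact (mul_lt_mul_iff_right₀ (by norm_num : (0:ℕ) < 75)).mpr this
    exact hsm.tendsto_atTop
  have h2m : ∀ c : ℝ, 0 < c → Tendsto (fun m : ℕ => 1 / (c * 2 ^ m)) atTop (nhds 0) := by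
    intro c hc
    have h1 : Tendsto (fun m : ℕ => c * (2:ℝ) ^ m) atTop atTop :=
      (tendsto_pow_atTop_atTop_of_one_lt one_lt_two).const_mul_atTop hc
    have h2 := h1.inv_tendsto_atTop
    have he : (fun m : ℕ => 1 / (c * 2 ^ m)) = (fun m : ℕ => c * (2:ℝ) ^ m)⁻¹ := by
      funext m; simp [one_div]
    rw [he]; exact h2
  -- lower bound: A^(1/64) ≤ L
  have hle : ∀ m : ℕ, A ^ ((1:ℝ)/64) * (2:ℝ) ^ (-(1 / ((64:ℝ) * 2 ^ m)))
      ≤ (θ (64 * 2 ^ m) : ℝ) ^ (1 / ((64 * 2 ^ m : ℕ) : ℝ)) := by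
    intro m
    have hc : ((64 * 2 ^ m : ℕ) : ℝ) = (64:ℝ) * 2 ^ m := by push_cast; ring
    have key : A ^ ((1:ℝ)/64) * (2:ℝ) ^ (-(1 / ((64:ℝ) * 2 ^ m)))
        = (A ^ (2 ^ m : ℕ) / 2) ^ (1 / ((64:ℝ) * 2 ^ m)) := by
      rw [Real.div_rpow (by positivity) (by norm_num), ← Real.rpow_natCast A (2 ^ m),
        ← Real.rpow_mul hA0, Real.rpow_neg (by norm_num), div_eq_mul_inv]
      congr 2
      push_cast
      field_simp
    rw [key, hc]
    apply Real.rpow_le_rpow (by positivity) _ (by positivity)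
    rw [div_le_iff₀ (by norm_num : (0:ℝ) < 2)]
    have h1 : ((2 * θ 64 : ℕ) ^ 2 ^ m : ℝ) ≤ ((2 * θ (64 * 2 ^ m) : ℕ) : ℝ) := by
      exact_mod_cast hlow m
    push_cast at h1
    rw [hAdef]
    linarith
  have h3 : Tendsto (fun m : ℕ => (2:ℝ) ^ (-(1 / ((64:ℝ) * 2 ^ m)))) atTop (nhds 1) := by
    have := (tendsto_const_nhds (x := (2:ℝ)) (f := atTop (α := ℕ))).rpow
      ((h2m 64 (by norm_num)).neg) (Or.inl (by norm_num))
    simpa using this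
  have hlowlim : Tendsto (fun m : ℕ => A ^ ((1:ℝ)/64) * (2:ℝ) ^ (-(1 / ((64:ℝ) * 2 ^ m))))
      atTop (nhds (A ^ ((1:ℝ)/64))) := by
    simpa using tendsto_const_nhds.mul h3
  have hLφ : Tendsto (fun m : ℕ => (θ (64 * 2 ^ m) : ℝ) ^ (1 / ((64 * 2 ^ m : ℕ) : ℝ)))
      atTop (nhds L) := hL.comp hφ
  have hAL : A ^ ((1:ℝ)/64) ≤ L := le_of_tendsto_of_tendsto' hlowlim hLφ hle
  -- upper bound: L ≤ B^(1/75)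
  have hge : ∀ m : ℕ, (θ (75 * 2 ^ m) : ℝ) ^ (1 / ((75 * 2 ^ m : ℕ) : ℝ))
      ≤ B ^ ((1:ℝ)/75) * (21:ℝ) ^ (-(1 / ((75:ℝ) * 2 ^ m))) := by
    intro m
    have hc : ((75 * 2 ^ m : ℕ) : ℝ) = (75:ℝ) * 2 ^ m := by push_cast; ring
    have key : B ^ ((1:ℝ)/75) * (21:ℝ) ^ (-(1 / ((75:ℝ) * 2 ^ m)))
        = (B ^ (2 ^ m : ℕ) / 21) ^ (1 / ((75:ℝ) * 2 ^ m)) := by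
      rw [Real.div_rpow (by positivity) (by norm_num), ← Real.rpow_natCast B (2 ^ m),
        ← Real.rpow_mul hB0, Real.rpow_neg (by norm_num), div_eq_mul_inv]
      congr 2
      push_cast
      field_simp
    rw [key, hc]
    apply Real.rpow_le_rpow (by positivity) _ (by positivity)
    rw [le_div_iff₀ (by norm_num : (0:ℝ) < 21)]
    have h1 : ((21 * θ (75 * 2 ^ m) : ℕ) : ℝ) ≤ ((21 * θ 75 : ℕ) ^ 2 ^ m : ℝ) := by
      exact_mod_cast hhigh m
    push_cast at h1
    rw [hBdef]
    linarith
  have h4 : Tendsto (fun m : ℕ => (21:ℝ) ^ (-(1 / ((75:ℝ) * 2 ^ m)))) atTop (nhds 1) := by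
    have := (tendsto_const_nhds (x := (21:ℝ)) (f := atTop (α := ℕ))).rpow
      ((h2m 75 (by norm_num)).neg) (Or.inl (by norm_num))
    simpa using this
  have huplim : Tendsto (fun m : ℕ => B ^ ((1:ℝ)/75) * (21:ℝ) ^ (-(1 / ((75:ℝ) * 2 ^ m))))
      atTop (nhds (B ^ ((1:ℝ)/75))) := by
    simpa using tendsto_const_nhds.mul h4
  have hLψ : Tendsto (fun m : ℕ => (θ (75 * 2 ^ m) : ℝ) ^ (1 / ((75 * 2 ^ m : ℕ) : ℝ)))
      atTop (nhds L) := hL.comp hψ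
  have hLB : L ≤ B ^ ((1:ℝ)/75) := le_of_tendsto_of_tendsto' hLψ huplim hge
  -- numeric contradiction
  have hnat : (21 * θ 75) ^ 64 < (2 * θ 64) ^ 75 := by
    rw [h64, h75]; norm_num
  have hR : B ^ (64:ℕ) < A ^ (75:ℕ) := by
    rw [hAdef, hBdef]
    exact_mod_cast hnat
  have hkey : B ^ ((1:ℝ)/75) < A ^ ((1:ℝ)/64) := by
    by_contra hcon
    push_neg at hcon
    have h2 : (A ^ ((1:ℝ)/64)) ^ (4800:ℕ) ≤ (B ^ ((1:ℝ)/75)) ^ (4800:ℕ) :=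
      pow_le_pow_left₀ (Real.rpow_nonneg hA0 _) hcon 4800
    have eA : (A ^ ((1:ℝ)/64)) ^ (4800:ℕ) = A ^ (75:ℕ) := by
      rw [← Real.rpow_natCast (A ^ ((1:ℝ)/64)) 4800, ← Real.rpow_mul hA0,
        ← Real.rpow_natCast A 75]
      norm_num
    have eB : (B ^ ((1:ℝ)/75)) ^ (4800:ℕ) = B ^ (64:ℕ) := by
      rw [← Real.rpow_natCast (B ^ ((1:ℝ)/75)) 4800, ← Real.rpow_mul hB0,
        ← Real.rpow_natCast B 64]
      norm_num
    rw [eA, eB] at h2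
    linarith
  linarith
end

section
/- Assuming θ(n) ≤ 21·θ(⌈n/2⌉)·θ(⌊n/2⌋) for all n ≥ 3, together with 2θ(k)² ≤ θ(2k) for all k ≥ 1 (which follows from the interleaving construction), and assuming the exact values θ(64) = 39911512393313043466768 and θ(75) = 30235147387260979648843264, the limit lim_{n→∞} θ(n)^{1/n} does not exist, where θ(n) is the number of 3AP-free permutations of {1,...,n}. -/
open Filter Real in
theorem theta_no_growth_rate
    (hsharma : ∀ n, 3 ≤ n → theta n ≤ 21 * theta ((n + 1) / 2) * theta (n / 2))
    (hlo : ∀ k, 1 ≤ k → 2 * theta k ^ 2 ≤ theta (2 * k))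
    (h64 : theta 64 = 39911512393313043466768)
    (h75 : theta 75 = 30235147387260979648843264) :
    ¬ ∃ L : ℝ, Filter.Tendsto (fun n : ℕ => (theta n : ℝ) ^ (1 / (n : ℝ)))
      Filter.atTop (nhds L) := by
  rintro ⟨L, hL⟩
  -- Lower recursion along n = 64 * 2^m
  have hlow : ∀ m : ℕ, (2 * theta 64) ^ 2 ^ m ≤ 2 * theta (64 * 2 ^ m) := by
    intro m
    induction m with
    | zero => simp
    | succ m ih =>
      have hk : 1 ≤ 64 * 2 ^ m := by have : 1 ≤ 2 ^ m := Nat.one_le_two_pow; omega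
      have h1 := hlo (64 * 2 ^ m) hk
      calc (2 * theta 64) ^ 2 ^ (m + 1)
          = ((2 * theta 64) ^ 2 ^ m) ^ 2 := by rw [← pow_mul, pow_succ]
        _ ≤ (2 * theta (64 * 2 ^ m)) ^ 2 := Nat.pow_le_pow_left ih 2
        _ = 2 * (2 * theta (64 * 2 ^ m) ^ 2) := by ring
        _ ≤ 2 * theta (2 * (64 * 2 ^ m)) := Nat.mul_le_mul_left 2 h1
        _ = 2 * theta (64 * 2 ^ (m + 1)) := by rw [show 2 * (64 * 2 ^ m) = 64 * 2 ^ (m + 1) by ring]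
  -- Upper recursion along n = 75 * 2^m
  have hup : ∀ m : ℕ, 21 * theta (75 * 2 ^ m) ≤ (21 * theta 75) ^ 2 ^ m := by
    intro m
    induction m with
    | zero => simp
    | succ m ih =>
      set k := 75 * 2 ^ m with hkdef
      have hk3 : 3 ≤ 2 * k := by have : 1 ≤ 2 ^ m := Nat.one_le_two_pow; omega
      have h1 := hsharma (2 * k) hk3
      have e1 : (2 * k + 1) / 2 = k := by omega
      have e2 : 2 * k / 2 = k := by omega
      rw [e1, e2] at h1
      calc 21 * theta (75 * 2 ^ (m + 1))
          = 21 * theta (2 * k) := by rw [show 75 * 2 ^ (m + 1) = 2 * k by rw [hkdef]; ring]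
        _ ≤ 21 * (21 * theta k * theta k) := Nat.mul_le_mul_left 21 h1
        _ = (21 * theta k) ^ 2 := by ring
        _ ≤ ((21 * theta 75) ^ 2 ^ m) ^ 2 := Nat.pow_le_pow_left ih 2
        _ = (21 * theta 75) ^ 2 ^ (m + 1) := by rw [← pow_mul, pow_succ]
  set a : ℝ := ((2 * theta 64 : ℕ) : ℝ) with ha
  set b : ℝ := ((21 * theta 75 : ℕ) : ℝ) with hb
  have ha0 : (0:ℝ) ≤ a := Nat.cast_nonneg _
  have hb0 : (0:ℝ) ≤ b := Nat.cast_nonneg _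
  set A : ℝ := a ^ ((64:ℝ)⁻¹) with hA
  set B : ℝ := b ^ ((75:ℝ)⁻¹) with hB
  -- Upper bound : L ≤ B
  have htend75 : Tendsto (fun m : ℕ => (75 * 2 ^ m : ℕ)) atTop atTop := by
    apply tendsto_atTop_mono (fun m => ?_) tendsto_id
    calc (m : ℕ) ≤ 2 ^ m := (Nat.lt_two_pow_self (n := m)).le
      _ ≤ 75 * 2 ^ m := Nat.le_mul_of_pos_left _ (by norm_num)
  have hg' : Tendsto (fun m : ℕ => ((theta (75 * 2 ^ m) : ℝ)) ^ (1 / ((75 * 2 ^ m : ℕ) : ℝ)))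
      atTop (nhds L) := hL.comp htend75
  have hLB : L ≤ B := by
    refine le_of_tendsto' hg' (fun m => ?_)
    have hnat : theta (75 * 2 ^ m) ≤ (21 * theta 75) ^ 2 ^ m := le_trans (Nat.le_mul_of_pos_left _ (by norm_num)) (hup m)
    have hcast : ((theta (75 * 2 ^ m) : ℝ)) ≤ b ^ (2 ^ m : ℕ) := by
      rw [hb]; push_cast; exact_mod_cast hnat
    have hz : (0:ℝ) ≤ 1 / ((75 * 2 ^ m : ℕ) : ℝ) := by positivity
    calc ((theta (75 * 2 ^ m) : ℝ)) ^ (1 / ((75 * 2 ^ m : ℕ) : ℝ))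
        ≤ (b ^ (2 ^ m : ℕ)) ^ (1 / ((75 * 2 ^ m : ℕ) : ℝ)) :=
          Real.rpow_le_rpow (Nat.cast_nonneg _) hcast hz
      _ = b ^ ((2 ^ m : ℕ) * (1 / ((75 * 2 ^ m : ℕ) : ℝ))) := by
          rw [← Real.rpow_natCast b (2 ^ m), ← Real.rpow_mul hb0]
      _ = B := by
          rw [hB]; congr 1
          have h2 : ((2:ℝ)) ^ m ≠ 0 := by positivity
          push_cast
          field_simp
  -- Lower bound : A ≤ L
  have htend64 : Tendsto (fun m : ℕ => (64 * 2 ^ m : ℕ)) atTop atTop := by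
    apply tendsto_atTop_mono (fun m => ?_) tendsto_id
    calc (m : ℕ) ≤ 2 ^ m := (Nat.lt_two_pow_self (n := m)).le
      _ ≤ 64 * 2 ^ m := Nat.le_mul_of_pos_left _ (by norm_num)
  have hg : Tendsto (fun m : ℕ => ((theta (64 * 2 ^ m) : ℝ)) ^ (1 / ((64 * 2 ^ m : ℕ) : ℝ)))
      atTop (nhds L) := hL.comp htend64
  have he : Tendsto (fun m : ℕ => 1 / ((64 * 2 ^ m : ℕ) : ℝ)) atTop (nhds 0) :=
    tendsto_one_div_atTop_nhds_zero_nat.comp htend64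
  have htwo : Tendsto (fun m : ℕ => (2:ℝ) ^ (1 / ((64 * 2 ^ m : ℕ) : ℝ))) atTop (nhds 1) := by
    have hc : ContinuousAt (fun x : ℝ => (2:ℝ) ^ x) 0 :=
      Real.continuousAt_const_rpow (by norm_num)
    have := hc.tendsto.comp he
    simpa [Function.comp_def] using this
  have hh : Tendsto (fun m : ℕ => A / (2:ℝ) ^ (1 / ((64 * 2 ^ m : ℕ) : ℝ))) atTop (nhds A) := by
    have := (tendsto_const_nhds (x := A) (f := atTop (α := ℕ))).div htwo one_ne_zero
    simpa [Pi.div_def] using this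
  have hAL : A ≤ L := by
    refine le_of_tendsto_of_tendsto' hh hg (fun m => ?_)
    have hnat := hlow m
    have hcast : a ^ (2 ^ m : ℕ) ≤ 2 * ((theta (64 * 2 ^ m) : ℝ)) := by
      rw [ha]; push_cast; exact_mod_cast hnat
    have hz : (0:ℝ) ≤ 1 / ((64 * 2 ^ m : ℕ) : ℝ) := by positivity
    have hpow2 : (0:ℝ) < (2:ℝ) ^ (1 / ((64 * 2 ^ m : ℕ) : ℝ)) :=
      Real.rpow_pos_of_pos (by norm_num) _
    rw [div_le_iff₀ hpow2]
    calc A = (a ^ (2 ^ m : ℕ)) ^ (1 / ((64 * 2 ^ m : ℕ) : ℝ)) := by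
          rw [hA, ← Real.rpow_natCast a (2 ^ m), ← Real.rpow_mul ha0]
          congr 1
          have h2 : ((2:ℝ)) ^ m ≠ 0 := by positivity
          push_cast
          field_simp
      _ ≤ (2 * ((theta (64 * 2 ^ m) : ℝ))) ^ (1 / ((64 * 2 ^ m : ℕ) : ℝ)) :=
          Real.rpow_le_rpow (by positivity) hcast hz
      _ = (2:ℝ) ^ (1 / ((64 * 2 ^ m : ℕ) : ℝ)) * ((theta (64 * 2 ^ m) : ℝ)) ^ (1 / ((64 * 2 ^ m : ℕ) : ℝ)) :=
          Real.mul_rpow (by norm_num) (Nat.cast_nonneg _)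
      _ = ((theta (64 * 2 ^ m) : ℝ)) ^ (1 / ((64 * 2 ^ m : ℕ) : ℝ)) * (2:ℝ) ^ (1 / ((64 * 2 ^ m : ℕ) : ℝ)) := by ring
  -- Numeric contradiction : B < A
  have hBA : B < A := by
    have hA0 : (0:ℝ) ≤ A := Real.rpow_nonneg ha0 _
    refine lt_of_pow_lt_pow_left₀ 4800 hA0 ?_
    have eB : B ^ (4800 : ℕ) = b ^ (64 : ℕ) := by
      rw [hB, ← Real.rpow_natCast (b ^ ((75:ℝ)⁻¹)) 4800, ← Real.rpow_mul hb0,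
        show (75:ℝ)⁻¹ * (4800:ℕ) = (64:ℕ) by push_cast; norm_num, Real.rpow_natCast]
    have eA : A ^ (4800 : ℕ) = a ^ (75 : ℕ) := by
      rw [hA, ← Real.rpow_natCast (a ^ ((64:ℝ)⁻¹)) 4800, ← Real.rpow_mul ha0,
        show (64:ℝ)⁻¹ * (4800:ℕ) = (75:ℕ) by push_cast; norm_num, Real.rpow_natCast]
    rw [eA, eB, ha, hb, h64, h75]
    have : ((21 * 30235147387260979648843264 : ℕ))^64 < ((2 * 39911512393313043466768 : ℕ))^75 := by
      norm_num
    exact_mod_cast this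
  linarith
end

section
/- Assuming the bounds 2θ(k)² ≤ θ(2k) ≤ 21θ(k)² for all k ≥ 1 and the values θ(128) = A and θ(162) = B (with A, B the known exact values satisfying (2A)^{1/128} > 2.28 and (21B)^{1/162} < 2.24), we have limsup_{n→∞} θ(n)^{1/n} ≥ (2θ(128))^{1/128} and liminf_{n→∞} θ(n)^{1/n} ≤ (21θ(162))^{1/162}; hence limsup − liminf ≥ (2θ(128))^{1/128} − (21θ(162))^{1/162} > 0. -/
open Filter

lemma theta_one_le : theta 1 ≤ 1 := by
  have h := Nat.card_le_card_of_injective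
    (Subtype.val : {f : Fin 1 → Fin 1 // Function.Bijective f ∧ IsAPFree f} → (Fin 1 → Fin 1))
    Subtype.val_injective
  simpa [theta, Nat.card_eq_fintype_card] using h

lemma theta_succ_le (n : ℕ) : theta (n + 1) ≤ (n + 1) * theta n := by
  classical
  set S := {f : Fin n → Fin n // Function.Bijective f ∧ IsAPFree f}
  -- map : delete the position of the maximal value
  have key : Nat.card {f : Fin (n+1) → Fin (n+1) // Function.Bijective f ∧ IsAPFree f}
      ≤ Nat.card (Fin (n+1) × S) := by
    apply Nat.card_le_card_of_injective (fun F => by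
      obtain ⟨f, hbij, hap⟩ := F
      let e := Equiv.ofBijective f hbij
      let p : Fin (n+1) := e.symm (Fin.last n)
      have hfp : f p = Fin.last n := e.apply_symm_apply (Fin.last n)
      have hne : ∀ i : Fin n, f (p.succAbove i) ≠ Fin.last n := by
        intro i h
        have : p.succAbove i = p := hbij.1 (h.trans hfp.symm)
        exact Fin.succAbove_ne p i this
      let g : Fin n → Fin n := fun i => (f (p.succAbove i)).castPred (hne i)
      have hginj : Function.Injective g := by
        intro i j hij
        have : f (p.succAbove i) = f (p.succAbove j) := by
          have := congrArg Fin.castSucc hij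
          rwa [Fin.castSucc_castPred, Fin.castSucc_castPred] at this
        exact Fin.succAbove_right_injective (hbij.1 this)
      refine (⟨p, ⟨g, Finite.injective_iff_bijective.mp hginj, ?_⟩⟩ : Fin (n+1) × S)
      intro i j k hij hjk
      have h := hap (p.succAbove i) (p.succAbove j) (p.succAbove k)
        (Fin.strictMono_succAbove p hij) (Fin.strictMono_succAbove p hjk)
      simpa [g, Fin.coe_castPred] using h) ?_
    rintro ⟨f₁, hbij₁, hap₁⟩ ⟨f₂, hbij₂, hap₂⟩ h
    simp only [Prod.mk.injEq, Subtype.mk.injEq] at h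
    obtain ⟨hp, hg⟩ := h
    have hg' := congrArg Subtype.val hg
    refine Subtype.ext ?_
    funext x
    show f₁ x = f₂ x
    by_cases hx : x = (Equiv.ofBijective f₁ hbij₁).symm (Fin.last n)
    · have h1 : f₁ x = Fin.last n := by
        rw [hx]; exact (Equiv.ofBijective f₁ hbij₁).apply_symm_apply _
      have h2 : f₂ x = Fin.last n := by
        rw [hx, hp]; exact (Equiv.ofBijective f₂ hbij₂).apply_symm_apply _
      rw [h1, h2]
    · obtain ⟨i, hi⟩ := Fin.exists_succAbove_eq hx
      have := congrFun hg' i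
      have e1 := congrArg Fin.castSucc this
      rw [Fin.castSucc_castPred, Fin.castSucc_castPred] at e1
      rw [← hi] at *
      rw [← hp] at e1
      exact e1
  simpa [theta, Nat.card_prod, S] using key

lemma theta_bound (hhi : ∀ k, 1 ≤ k → theta (2 * k) ≤ 21 * theta k ^ 2) :
    ∀ n, 1 ≤ n → 21 * theta n * n ^ 2 ≤ 27 ^ n := by
  intro n
  induction n using Nat.strong_induction_on with
  | _ n IH =>
    intro hn
    match n, hn with
    | 1, _ =>
      have := theta_one_le
      nlinarith [theta_one_le]
    | 2, _ =>
      have h1 : theta 2 ≤ 2 * theta 1 := theta_succ_le 1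
      have h2 := theta_one_le
      have : theta 2 ≤ 2 := by omega
      nlinarith
    | (m+3), _ =>
      rcases Nat.even_or_odd (m+3) with ⟨k, hk⟩ | ⟨k, hk⟩
      · -- n = 2k, k ≥ 2
        have hk2 : 2 ≤ k := by omega
        have hIH := IH k (by omega) (by omega)
        have hh := hhi k (by omega)
        rw [hk]
        have h27 : (27:ℕ) ^ (k + k) = 27 ^ k * 27 ^ k := pow_add 27 k k
        have hsq : (21 * theta k * k ^ 2) * (21 * theta k * k ^ 2) ≤ 27 ^ k * 27 ^ k :=
          Nat.mul_le_mul hIH hIH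
        calc 21 * theta (k + k) * (k + k) ^ 2
            = 21 * theta (2 * k) * (4 * k ^ 2) := by ring_nf
          _ ≤ 21 * (21 * theta k ^ 2) * (4 * k ^ 2) := by
              have := Nat.mul_le_mul_right (4 * k ^ 2) (Nat.mul_le_mul_left 21 hh)
              simpa [mul_assoc] using this
          _ = (441 * theta k ^ 2 * k ^ 2) * 4 := by ring
          _ ≤ (441 * theta k ^ 2 * k ^ 2) * k ^ 2 := Nat.mul_le_mul_left _ (by nlinarith)
          _ = (21 * theta k * k ^ 2) * (21 * theta k * k ^ 2) := by ring
          _ ≤ 27 ^ k * 27 ^ k := hsq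
          _ = 27 ^ (k + k) := (pow_add 27 k k).symm
      · -- n = 2k+1, k ≥ 1
        have hk1 : 1 ≤ k := by omega
        have hIH := IH k (by omega) (by omega)
        have hh := hhi k (by omega)
        have hdel : theta (2 * k + 1) ≤ (2 * k + 1) * theta (2 * k) := theta_succ_le (2 * k)
        rw [hk]
        have hsq : (21 * theta k * k ^ 2) * (21 * theta k * k ^ 2) ≤ 27 ^ k * 27 ^ k :=
          Nat.mul_le_mul hIH hIH
        have h3k : 2 * k + 1 ≤ 3 * k := by omega
        calc 21 * theta (2 * k + 1) * (2 * k + 1) ^ 2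
            ≤ 21 * ((2 * k + 1) * (21 * theta k ^ 2)) * (2 * k + 1) ^ 2 := by
              have : theta (2 * k + 1) ≤ (2 * k + 1) * (21 * theta k ^ 2) :=
                hdel.trans (Nat.mul_le_mul_left _ hh)
              exact Nat.mul_le_mul_right _ (Nat.mul_le_mul_left 21 this)
          _ = (2 * k + 1) ^ 3 * (441 * theta k ^ 2) := by ring
          _ ≤ (3 * k) ^ 3 * (441 * theta k ^ 2) := by
              exact Nat.mul_le_mul_right _ (Nat.pow_le_pow_left h3k 3)
          _ = (27 * (441 * theta k ^ 2 * k ^ 2)) * k := by ring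
          _ ≤ (27 * (441 * theta k ^ 2 * k ^ 2)) * k ^ 2 := by
              exact Nat.mul_le_mul_left _ (by nlinarith)
          _ = 27 * ((21 * theta k * k ^ 2) * (21 * theta k * k ^ 2)) := by ring
          _ ≤ 27 * (27 ^ k * 27 ^ k) := Nat.mul_le_mul_left 27 hsq
          _ = 27 ^ (2 * k + 1) := by rw [pow_succ, two_mul, pow_add]; ring

-- generic rpow computation:
lemma rpow_pow_div (c : ℝ) (hc : 0 ≤ c) (a m : ℕ) (ha : 1 ≤ a) :
    ((c ^ (2 ^ m) : ℝ)) ^ (1 / ((a * 2 ^ m : ℕ) : ℝ)) = c ^ (1 / (a : ℝ)) := by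
  have h2 : ((a * 2 ^ m : ℕ) : ℝ) = (a : ℝ) * 2 ^ m := by push_cast; ring
  have hane : (a : ℝ) ≠ 0 := by positivity
  have h2m : ((2 : ℝ) ^ m) ≠ 0 := by positivity
  rw [← Real.rpow_natCast c (2 ^ m), ← Real.rpow_mul hc, h2]
  congr 1
  push_cast
  field_simp

theorem limsup_liminf_gap (A B : ℕ)
    (hA : theta 128 = A) (hB : theta 162 = B)
    (hAval : (2.28 : ℝ) < (2 * A : ℝ) ^ (1 / (128 : ℝ)))
    (hBval : ((21 * B : ℝ)) ^ (1 / (162 : ℝ)) < (2.24 : ℝ))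
    (hlo : ∀ k, 1 ≤ k → 2 * theta k ^ 2 ≤ theta (2 * k))
    (hhi : ∀ k, 1 ≤ k → theta (2 * k) ≤ 21 * theta k ^ 2) :
    (2 * theta 128 : ℝ) ^ (1 / (128 : ℝ)) ≤
        Filter.atTop.limsup (fun n : ℕ => (theta n : ℝ) ^ (1 / (n : ℝ))) ∧
    Filter.atTop.liminf (fun n : ℕ => (theta n : ℝ) ^ (1 / (n : ℝ))) ≤
        (21 * theta 162 : ℝ) ^ (1 / (162 : ℝ)) ∧
    (2 * theta 128 : ℝ) ^ (1 / (128 : ℝ)) - (21 * theta 162 : ℝ) ^ (1 / (162 : ℝ)) ≤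
      Filter.atTop.limsup (fun n : ℕ => (theta n : ℝ) ^ (1 / (n : ℝ))) -
        Filter.atTop.liminf (fun n : ℕ => (theta n : ℝ) ^ (1 / (n : ℝ))) ∧
    0 < (2 * theta 128 : ℝ) ^ (1 / (128 : ℝ)) -
        (21 * theta 162 : ℝ) ^ (1 / (162 : ℝ)) := by
  set u : ℕ → ℝ := fun n : ℕ => (theta n : ℝ) ^ (1 / (n : ℝ)) with hu
  set C : ℝ := (2 * theta 128 : ℝ) ^ (1 / (128 : ℝ)) with hC
  set D : ℝ := (21 * theta 162 : ℝ) ^ (1 / (162 : ℝ)) with hD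
  -- upper bound 27
  have hθ27 : ∀ n, 1 ≤ n → theta n ≤ 27 ^ n := by
    intro n hn
    have h := theta_bound hhi n hn
    calc theta n ≤ theta n * (21 * n ^ 2) :=
          Nat.le_mul_of_pos_right _ (by positivity)
      _ = 21 * theta n * n ^ 2 := by ring
      _ ≤ 27 ^ n := h
  have hu27 : ∀ n, u n ≤ 27 := by
    intro n
    rcases Nat.eq_zero_or_pos n with h0 | hpos
    · subst h0; simp [hu]
    · have h1 : (theta n : ℝ) ≤ (27 : ℝ) ^ n := by exact_mod_cast hθ27 n hpos
      have h2 : u n ≤ ((27 : ℝ) ^ n) ^ (1 / (n : ℝ)) :=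
        Real.rpow_le_rpow (by positivity) h1 (by positivity)
      have hne : (n : ℝ) ≠ 0 := by positivity
      calc u n ≤ ((27 : ℝ) ^ n) ^ (1 / (n : ℝ)) := h2
        _ = (27 : ℝ) ^ ((n : ℝ) * (1 / (n : ℝ))) := by
            rw [← Real.rpow_natCast 27 n, ← Real.rpow_mul (by norm_num)]
        _ = 27 := by rw [mul_one_div_cancel hne, Real.rpow_one]
  have hu0 : ∀ n, 0 ≤ u n := fun n => Real.rpow_nonneg (by positivity) _
  have hbddU : IsBoundedUnder (· ≤ ·) atTop u := Filter.isBoundedUnder_of ⟨27, hu27⟩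
  have hbddL : IsBoundedUnder (· ≥ ·) atTop u := Filter.isBoundedUnder_of ⟨0, hu0⟩
  -- nat chains
  have hchainC : ∀ m, (2 * theta 128) ^ (2 ^ m) ≤ 2 * theta (128 * 2 ^ m) := by
    intro m
    induction m with
    | zero => simp
    | succ m ih =>
      have hk : 1 ≤ 128 * 2 ^ m := Nat.one_le_iff_ne_zero.mpr (by positivity)
      have h := hlo (128 * 2 ^ m) hk
      calc (2 * theta 128) ^ 2 ^ (m + 1) = ((2 * theta 128) ^ 2 ^ m) ^ 2 := by
            rw [← pow_mul, pow_succ]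
        _ ≤ (2 * theta (128 * 2 ^ m)) ^ 2 := Nat.pow_le_pow_left ih 2
        _ = 2 * (2 * theta (128 * 2 ^ m) ^ 2) := by ring
        _ ≤ 2 * theta (2 * (128 * 2 ^ m)) := Nat.mul_le_mul_left 2 h
        _ = 2 * theta (128 * 2 ^ (m + 1)) := by rw [show 2 * (128 * 2 ^ m) = 128 * 2 ^ (m + 1) by ring]
  have hchainD : ∀ m, 21 * theta (162 * 2 ^ m) ≤ (21 * theta 162) ^ (2 ^ m) := by
    intro m
    induction m with
    | zero => simp
    | succ m ih =>
      have hk : 1 ≤ 162 * 2 ^ m := Nat.one_le_iff_ne_zero.mpr (by positivity)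
      have h := hhi (162 * 2 ^ m) hk
      calc 21 * theta (162 * 2 ^ (m + 1)) = 21 * theta (2 * (162 * 2 ^ m)) := by
            rw [show 2 * (162 * 2 ^ m) = 162 * 2 ^ (m + 1) by ring]
        _ ≤ 21 * (21 * theta (162 * 2 ^ m) ^ 2) := Nat.mul_le_mul_left 21 h
        _ = (21 * theta (162 * 2 ^ m)) ^ 2 := by ring
        _ ≤ ((21 * theta 162) ^ 2 ^ m) ^ 2 := Nat.pow_le_pow_left ih 2
        _ = (21 * theta 162) ^ 2 ^ (m + 1) := by rw [← pow_mul, pow_succ]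
  -- key lower estimate for limsup along 128 * 2^m
  have keyC : ∀ m : ℕ, C / (2 : ℝ) ^ (1 / ((128 * 2 ^ m : ℕ) : ℝ)) ≤ u (128 * 2 ^ m) := by
    intro m
    set N : ℕ := 128 * 2 ^ m with hN
    have hNpos : (0 : ℝ) < (N : ℝ) := by positivity
    have hcast : ((2 * theta 128 : ℕ) : ℝ) ^ (2 ^ m) / 2 ≤ (theta N : ℝ) := by
      have := hchainC m
      have h2 : ((2 * theta 128 : ℕ) ^ (2 ^ m) : ℝ) ≤ ((2 * theta N : ℕ) : ℝ) := by
        exact_mod_cast this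
      push_cast at h2 ⊢
      linarith
    have hexp : (0 : ℝ) ≤ 1 / (N : ℝ) := by positivity
    have hbase : (0 : ℝ) ≤ ((2 * theta 128 : ℕ) : ℝ) ^ (2 ^ m) / 2 := by positivity
    have h1 : (((2 * theta 128 : ℕ) : ℝ) ^ (2 ^ m) / 2) ^ (1 / (N : ℝ)) ≤ u N :=
      Real.rpow_le_rpow hbase hcast hexp
    have h2 : (((2 * theta 128 : ℕ) : ℝ) ^ (2 ^ m) / 2) ^ (1 / (N : ℝ)) =
        (((2 * theta 128 : ℕ) : ℝ) ^ (2 ^ m)) ^ (1 / (N : ℝ)) / (2 : ℝ) ^ (1 / (N : ℝ)) :=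
      Real.div_rpow (by positivity) (by norm_num) _
    have h3 : (((2 * theta 128 : ℕ) : ℝ) ^ (2 ^ m)) ^ (1 / (N : ℝ)) = C := by
      rw [hN]
      rw [rpow_pow_div _ (by positivity) 128 m (by norm_num)]
      rw [hC]; push_cast; norm_num
    rw [h2, h3] at h1
    exact h1
  -- key upper estimate for liminf along 162 * 2^m
  have keyD : ∀ m : ℕ, u (162 * 2 ^ m) ≤ D := by
    intro m
    set N : ℕ := 162 * 2 ^ m with hN
    have hcast : (theta N : ℝ) ≤ ((21 * theta 162 : ℕ) : ℝ) ^ (2 ^ m) := by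
      have h := hchainD m
      have h' : theta N ≤ (21 * theta 162) ^ (2 ^ m) :=
        le_trans (by rw [hN]; exact Nat.le_mul_of_pos_left _ (by norm_num)) h
      exact_mod_cast h'
    have h1 : u N ≤ (((21 * theta 162 : ℕ) : ℝ) ^ (2 ^ m)) ^ (1 / (N : ℝ)) :=
      Real.rpow_le_rpow (by positivity) hcast (by positivity)
    have h3 : (((21 * theta 162 : ℕ) : ℝ) ^ (2 ^ m)) ^ (1 / (N : ℝ)) = D := by
      rw [hN, rpow_pow_div _ (by positivity) 162 m (by norm_num), hD]
      push_cast; norm_num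
    rw [h3] at h1
    exact h1
  -- tendsto facts
  have hφC : Tendsto (fun m : ℕ => 128 * 2 ^ m) atTop atTop := by
    apply tendsto_atTop_mono (fun m => ?_) tendsto_id
    calc (m : ℕ) ≤ 2 ^ m := Nat.le_of_lt (Nat.lt_two_pow_self (n := m))
      _ ≤ 128 * 2 ^ m := Nat.le_mul_of_pos_left _ (by norm_num)
  have hφD : Tendsto (fun m : ℕ => 162 * 2 ^ m) atTop atTop := by
    apply tendsto_atTop_mono (fun m => ?_) tendsto_id
    calc (m : ℕ) ≤ 2 ^ m := Nat.le_of_lt (Nat.lt_two_pow_self (n := m))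
      _ ≤ 162 * 2 ^ m := Nat.le_mul_of_pos_left _ (by norm_num)
  have hvC : Tendsto (fun m : ℕ => C / (2 : ℝ) ^ (1 / ((128 * 2 ^ m : ℕ) : ℝ))) atTop (nhds C) := by
    have ht : Tendsto (fun m : ℕ => 1 / ((128 * 2 ^ m : ℕ) : ℝ)) atTop (nhds 0) := by
      simp only [one_div]
      apply Tendsto.inv_tendsto_atTop
      apply tendsto_natCast_atTop_atTop.comp hφC
    have h2 : Tendsto (fun m : ℕ => (2 : ℝ) ^ (1 / ((128 * 2 ^ m : ℕ) : ℝ))) atTop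
        (nhds 1) := by
      have := (Real.continuousAt_const_rpow (a := (2:ℝ)) (b := 0) two_ne_zero).tendsto.comp ht
      simpa [Function.comp_def, Real.rpow_zero] using this
    simpa [div_one, Pi.div_def] using Tendsto.div (tendsto_const_nhds (x := C)) h2 one_ne_zero
  -- limsup lower bound
  have hlimsup : C ≤ Filter.atTop.limsup u := by
    apply le_of_forall_pos_le_add
    intro ε hε
    have hfreq : ∃ᶠ n in atTop, C - ε ≤ u n := by
      have hev : ∀ᶠ m in atTop, C - ε ≤ C / (2 : ℝ) ^ (1 / ((128 * 2 ^ m : ℕ) : ℝ)) :=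
        hvC.eventually (eventually_ge_nhds (by linarith))
      have hev' : ∀ᶠ m in atTop, C - ε ≤ u (128 * 2 ^ m) :=
        hev.mono fun m h => h.trans (keyC m)
      exact hφC.frequently hev'.frequently
    have := Filter.le_limsup_of_frequently_le hfreq hbddU
    linarith
  -- liminf upper bound
  have hliminf : Filter.atTop.liminf u ≤ D := by
    apply Filter.liminf_le_of_frequently_le _ hbddL
    exact hφD.frequently (Filter.Eventually.of_forall keyD).frequently
  -- numeric facts
  have hC228 : (2.28 : ℝ) < C := by rw [hC, hA]; exact hAval
  have hD224 : D < (2.24 : ℝ) := by rw [hD, hB]; exact hBval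
  exact ⟨hlimsup, hliminf, sub_le_sub hlimsup hliminf, by linarith⟩
end
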